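/- arXiv:2505.22885 — 7 statements merged into one kernel-verified Lean document; each statement's English description precedes it below -/
import Mathlib

section
/- Let f : ℝ^p × ℝ^n × ℝ → ℂ be infinitely differentiable and homogeneous of degree a ∈ ℂ for the zoom action (f(x, sX, s⁻¹t) = s^a f(x, X, t) for all s > 0), and assume a ∉ ℤ. Set γ₊(x, X) = f(x, X, 1) and γ₋(x, X) = f(x, X, −1). Then for every x ∈ ℝ^p and every j ∈ ℕ, the j-th iterated derivative at 0 of the map Y ↦ γ₊(x, Y) vanishes and the j-th iterated derivative at 0 of the map Y ↦ γ₋(x, Y) vanishes (both γ₊ and γ₋ are flat on {X = 0}); moreover f(x, X, 0) = 0 for all x and X. -/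
open Filter Topology

private lemma key_scalar (b : ℂ) (hb : ∀ z : ℤ, b ≠ (z : ℂ)) (ψ : ℝ → ℂ)
    (hψ : ContDiff ℝ ((⊤:ℕ∞) : WithTop ℕ∞) ψ) (c : ℂ)
    (h : ∀ s : ℝ, 0 < s → ψ s = (s : ℂ) ^ b * c) : c = 0 := by
  by_contra hc
  obtain ⟨k, hk⟩ := exists_nat_gt b.re
  have hder : ∀ K : ℕ, ∀ s : ℝ, 0 < s → iteratedDeriv K ψ s =
      (∏ i ∈ Finset.range K, (b - (i : ℂ))) * ((s : ℂ) ^ (b - K) * c) := by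
    intro K
    induction K with
    | zero => intro s hs; simpa using h s hs
    | succ K ih =>
      intro s hs
      rw [iteratedDeriv_succ]
      have hev : iteratedDeriv K ψ =ᶠ[𝓝 s]
          fun t : ℝ => (∏ i ∈ Finset.range K, (b - (i : ℂ))) * ((t : ℂ) ^ (b - K) * c) := by
        filter_upwards [Ioi_mem_nhds hs] with t ht using ih t ht
      rw [hev.deriv_eq]
      have hw : b - (K : ℂ) ≠ 0 := sub_ne_zero.2 (hb K)
      have hd0 : HasDerivAt (fun t : ℝ => (t : ℂ) ^ (b - (K : ℂ)))
          ((b - K) * (s : ℂ) ^ (b - K - 1)) s := by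
        have h1 := hasDerivAt_ofReal_cpow_const' (x := s) (ne_of_gt hs) (r := b - K - 1)
          (by intro hcon; apply hw; linear_combination hcon)
        have h2 := h1.const_mul (b - (K : ℂ))
        have h3 : (fun y : ℝ => (b - (K : ℂ)) * ((y : ℂ) ^ (b - (K:ℂ) - 1 + 1) / (b - (K:ℂ) - 1 + 1)))
            = fun y : ℝ => (y : ℂ) ^ (b - (K : ℂ)) := by
          funext y
          rw [sub_add_cancel, mul_comm, div_mul_cancel₀ _ hw]
        rw [h3] at h2
        exact h2
      have hd : HasDerivAt
          (fun t : ℝ => (∏ i ∈ Finset.range K, (b - (i : ℂ))) * ((t : ℂ) ^ (b - K) * c))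
          ((∏ i ∈ Finset.range K, (b - (i : ℂ))) * (((b - K) * (s : ℂ) ^ (b - K - 1)) * c)) s :=
        (hd0.mul_const c).const_mul _
      rw [hd.deriv, Finset.prod_range_succ]
      have hexp : b - ((K : ℂ) + 1) = b - K - 1 := by ring
      push_cast
      rw [hexp]
      ring
  have hprodpos : 0 < ‖∏ i ∈ Finset.range k, (b - (i : ℂ))‖ * ‖c‖ := by
    apply mul_pos (norm_pos_iff.2 ?_) (norm_pos_iff.2 hc)
    exact Finset.prod_ne_zero_iff.2 fun i _ => sub_ne_zero.2 (hb i)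
  have hcont : Continuous (iteratedDeriv k ψ) :=
    (contDiff_iff_iteratedDeriv.1 hψ).1 k le_top
  have h1 : Tendsto (fun s : ℝ => ‖iteratedDeriv k ψ s‖) (𝓝[>] 0)
      (𝓝 ‖iteratedDeriv k ψ 0‖) :=
    (hcont.norm.continuousAt).tendsto.mono_left nhdsWithin_le_nhds
  have h2 : Tendsto (fun s : ℝ => ‖iteratedDeriv k ψ s‖) (𝓝[>] 0) atTop := by
    have hbase : Tendsto (fun s : ℝ => (s⁻¹) ^ ((k : ℝ) - b.re)) (𝓝[>] (0:ℝ)) atTop :=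
      (tendsto_rpow_atTop (by linarith)).comp tendsto_inv_nhdsGT_zero
    have hmul := hbase.const_mul_atTop hprodpos
    apply hmul.congr'
    filter_upwards [self_mem_nhdsWithin] with s hs
    have hs' : (0:ℝ) < s := hs
    rw [hder k s hs']
    have hnorm : ‖(s : ℂ) ^ (b - (k:ℂ))‖ = s ^ (b.re - k) := by
      rw [Complex.norm_cpow_eq_rpow_re_of_pos hs']
      norm_num
    have hinv : (s⁻¹) ^ ((k : ℝ) - b.re) = s ^ (b.re - k) := by
      rw [Real.inv_rpow hs'.le, ← Real.rpow_neg hs'.le, neg_sub]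
    rw [norm_mul, norm_mul, hnorm, hinv]
    ring
  exact not_tendsto_atTop_of_tendsto_nhds h1 h2

private lemma fderiv_comp_add_const' {E F : Type*} [NormedAddCommGroup E] [NormedSpace ℝ E]
    [NormedAddCommGroup F] [NormedSpace ℝ F] {h : E → F} (hh : Differentiable ℝ h) (c x : E) :
    fderiv ℝ (fun y => h (y + c)) x = fderiv ℝ h (x + c) := by
  have h2 : HasFDerivAt (fun y : E => y + c) (ContinuousLinearMap.id ℝ E) x :=
    (hasFDerivAt_id x).add_const c
  have h3 := (hh (x + c)).hasFDerivAt.comp x h2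
  simpa [Function.comp_def] using h3.fderiv

private lemma iteratedFDeriv_comp_add_const' {E F : Type*} [NormedAddCommGroup E]
    [NormedSpace ℝ E] [NormedAddCommGroup F] [NormedSpace ℝ F] {h : E → F}
    (hh : ContDiff ℝ ((⊤:ℕ∞) : WithTop ℕ∞) h) (c : E) (j : ℕ) (x : E) :
    iteratedFDeriv ℝ j (fun y => h (y + c)) x = iteratedFDeriv ℝ j h (x + c) := by
  induction j generalizing x with
  | zero => ext m; simp
  | succ j ih =>
    ext m
    rw [iteratedFDeriv_succ_apply_left, iteratedFDeriv_succ_apply_left]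
    have hfun : (iteratedFDeriv ℝ j fun y => h (y + c)) =
        fun y => iteratedFDeriv ℝ j h (y + c) := funext fun y => ih y
    have hd : Differentiable ℝ (iteratedFDeriv ℝ j h) := by
      have := hh.iteratedFDeriv_right (m := 1) (i := j) (by exact_mod_cast le_top)
      exact this.differentiable (by simp)
    rw [hfun, fderiv_comp_add_const' hd c x]

private lemma param_smooth {E : Type*} [NormedAddCommGroup E] [NormedSpace ℝ E]
    {u : E × ℝ → ℂ} (hu : ContDiff ℝ ((⊤:ℕ∞) : WithTop ℕ∞) u) (j : ℕ) :
    ContDiff ℝ ((⊤:ℕ∞) : WithTop ℕ∞) (fun t : ℝ => iteratedFDeriv ℝ j (fun Y : E => u (Y, t)) 0) := by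
  have hrep : ∀ t : ℝ, iteratedFDeriv ℝ j (fun Y : E => u (Y, t)) 0 =
      ContinuousMultilinearMap.compContinuousLinearMapL
        (fun _ : Fin j => ContinuousLinearMap.inl ℝ E ℝ) (iteratedFDeriv ℝ j u (0, t)) := by
    intro t
    have h1 : (fun Y : E => u (Y, t)) =
        (fun z : E × ℝ => u (z + ((0 : E), t))) ∘ (ContinuousLinearMap.inl ℝ E ℝ) := by
      funext Y; simp [Prod.ext_iff]
    have hsh : ContDiff ℝ ((⊤:ℕ∞) : WithTop ℕ∞) (fun z : E × ℝ => u (z + ((0 : E), t))) :=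
      hu.comp (contDiff_id.add contDiff_const)
    rw [h1, ContinuousLinearMap.iteratedFDeriv_comp_right _ hsh _ (by exact_mod_cast le_top),
      ContinuousMultilinearMap.compContinuousLinearMapL_apply,
      map_zero, iteratedFDeriv_comp_add_const' hu ((0:E), t) j, zero_add]
  rw [funext hrep]
  exact (ContinuousMultilinearMap.compContinuousLinearMapL (𝕜 := ℝ) (F := ℂ)
      (fun _ : Fin j => ContinuousLinearMap.inl ℝ E ℝ)).contDiff.comp
    ((hu.iteratedFDeriv_right (m := ((⊤:ℕ∞) : WithTop ℕ∞)) (by exact_mod_cast le_top)).comp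
      (contDiff_const.prodMk contDiff_id))

/-- If `f : ℝ^p × ℝ^n × ℝ → ℂ` is smooth and homogeneous of degree `a ∉ ℤ` for
the zoom action, then `γ₊(x, X) = f(x, X, 1)` and `γ₋(x, X) = f(x, X, −1)` are flat on
`{X = 0}` (all their iterated derivatives in `X` vanish at `0`), and `f(x, X, 0) = 0`. -/
theorem stmt_5 (p n : ℕ) (a : ℂ) (ha : ∀ z : ℤ, a ≠ (z : ℂ))
    (f : (Fin p → ℝ) × (Fin n → ℝ) × ℝ → ℂ)
    (hf : ContDiff ℝ (⊤ : ℕ∞) f)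
    (hhom : ∀ s : ℝ, 0 < s → ∀ (x : Fin p → ℝ) (X : Fin n → ℝ) (t : ℝ),
      f (x, s • X, s⁻¹ * t) = (s : ℂ) ^ a * f (x, X, t)) :
    (∀ (x : Fin p → ℝ) (j : ℕ),
        iteratedFDeriv ℝ j (fun Y : Fin n → ℝ => f (x, Y, 1)) 0 = 0 ∧
        iteratedFDeriv ℝ j (fun Y : Fin n → ℝ => f (x, Y, -1)) 0 = 0) ∧
    (∀ (x : Fin p → ℝ) (X : Fin n → ℝ), f (x, X, 0) = 0) := by
  have hf' : ContDiff ℝ ((⊤:ℕ∞) : WithTop ℕ∞) f := hf.of_le (by simp)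
  have hpart2 : ∀ (x : Fin p → ℝ) (X : Fin n → ℝ), f (x, X, 0) = 0 := by
    intro x X
    have hψ : ContDiff ℝ ((⊤:ℕ∞) : WithTop ℕ∞) (fun s : ℝ => f (x, s • X, 0)) :=
      hf'.comp (contDiff_const.prodMk ((contDiff_id.smul contDiff_const).prodMk contDiff_const))
    refine key_scalar a ha _ hψ _ (fun s hs => ?_)
    have h1 := hhom s hs x X 0
    rwa [mul_zero] at h1
  refine ⟨?_, hpart2⟩
  intro x j
  have hu : ContDiff ℝ ((⊤:ℕ∞) : WithTop ℕ∞) (fun z : (Fin n → ℝ) × ℝ => f (x, z)) :=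
    hf'.comp (contDiff_const.prodMk contDiff_id)
  set g : ℝ → ContinuousMultilinearMap ℝ (fun _ : Fin j => (Fin n → ℝ)) ℂ :=
    fun t => iteratedFDeriv ℝ j (fun Y : Fin n → ℝ => f (x, Y, t)) 0 with hgdef
  have hgsmooth : ContDiff ℝ ((⊤:ℕ∞) : WithTop ℕ∞) g := param_smooth hu j
  have hslice : ∀ t : ℝ, ContDiff ℝ ((⊤:ℕ∞) : WithTop ℕ∞)
      (fun Y : Fin n → ℝ => f (x, Y, t)) :=
    fun t => hf'.comp (contDiff_const.prodMk (contDiff_id.prodMk contDiff_const))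
  have hkey : ∀ (ε : ℝ) (s : ℝ), 0 < s → ∀ m : Fin j → (Fin n → ℝ),
      (s:ℂ) ^ a * g (ε * s) m = (s:ℂ) ^ (j:ℕ) * g ε m := by
    intro ε s hs m
    have hcomp : (fun Y : Fin n → ℝ => f (x, Y, ε)) ∘
        (s • ContinuousLinearMap.id ℝ (Fin n → ℝ)) =
        fun Y : Fin n → ℝ => (s:ℂ) ^ a • f (x, Y, ε * s) := by
      funext Y
      have h1 := hhom s hs x Y (ε * s)
      have h2 : s⁻¹ * (ε * s) = ε := by field_simp
      rw [h2] at h1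
      simpa [smul_eq_mul] using h1
    have h1 := ContinuousLinearMap.iteratedFDeriv_comp_right
      (s • ContinuousLinearMap.id ℝ (Fin n → ℝ)) (hslice ε) (0 : Fin n → ℝ)
      (i := j) (by exact_mod_cast le_top)
    rw [hcomp, iteratedFDeriv_const_smul_apply'
      ((hslice (ε * s)).contDiffAt.of_le (by exact_mod_cast le_top)), map_zero] at h1
    have h2 := congrArg (fun (G : ContinuousMultilinearMap ℝ (fun _ : Fin j => (Fin n → ℝ)) ℂ)
      => G m) h1
    simp only [ContinuousMultilinearMap.smul_apply,
      ContinuousMultilinearMap.compContinuousLinearMap_apply] at h2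
    have h3 : (fun i => s • (ContinuousLinearMap.id ℝ (Fin n → ℝ)) (m i)) =
        fun i => (fun _ : Fin j => s) i • m i := rfl
    rw [h3, ContinuousMultilinearMap.map_smul_univ] at h2
    simp only [Finset.prod_const, Finset.card_univ, Fintype.card_fin] at h2
    rw [smul_eq_mul] at h2
    rw [h2, Complex.real_smul]
    norm_cast
  have hzero : ∀ ε : ℝ, g ε = 0 := by
    intro ε
    ext m
    have hψ : ContDiff ℝ ((⊤:ℕ∞) : WithTop ℕ∞) (fun s : ℝ => g (ε * s) m) :=
      ((ContinuousMultilinearMap.apply ℝ (fun _ : Fin j => (Fin n → ℝ)) ℂ m).contDiff.comp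
        hgsmooth).comp (contDiff_const.mul contDiff_id)
    have hb : ∀ z : ℤ, (j:ℂ) - a ≠ (z : ℂ) := by
      intro z hz
      exact ha ((j:ℤ) - z) (by push_cast; linear_combination -hz)
    have hrel : ∀ s : ℝ, 0 < s → g (ε * s) m = (s:ℂ) ^ ((j:ℂ) - a) * (g ε m) := by
      intro s hs
      have hs0 : (s:ℂ) ≠ 0 := by exact_mod_cast hs.ne'
      have hsa : (s:ℂ) ^ a ≠ 0 := by
        simp [Complex.cpow_eq_zero_iff, hs0]
      apply mul_left_cancel₀ hsa
      rw [hkey ε s hs m, ← mul_assoc, ← Complex.cpow_add _ _ hs0]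
      have hj : a + ((j:ℂ) - a) = (j:ℂ) := by ring
      rw [hj, Complex.cpow_natCast]
    have hc := key_scalar ((j:ℂ) - a) hb _ hψ (g ε m) hrel
    simpa using hc
  exact ⟨hzero 1, hzero (-1)⟩
end

section
/- Let a ∈ ℕ with a ≥ 1, and let f : ℝ^p × ℝ^n × ℝ → ℂ be infinitely differentiable and homogeneous of degree a for the zoom action (f(x, sX, s⁻¹t) = s^a f(x, X, t) for all s > 0). Set γ₊(x, X) = f(x, X, 1) and γ₋(x, X) = f(x, X, −1). Then: (i) for every x and every j ∈ ℕ with j ≤ a − 1, the j-th iterated derivatives at 0 of Y ↦ γ₊(x, Y) and of Y ↦ γ₋(x, Y) both vanish; (ii) for every x, every j ∈ ℕ with j ≥ a, and every X ∈ ℝ^n, D_Y^j γ₊(x, 0)[X, …, X] = (−1)^{j−a} · D_Y^j γ₋(x, 0)[X, …, X]; (iii) for every x and X, f(x, X, 0) = (1/a!) · D_Y^a γ₊(x, 0)[X, …, X]. -/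
open Set Filter Topology

private lemma nat_lt_inf {j : ℕ} : (j : WithTop ℕ∞) < ((⊤ : ℕ∞) : WithTop ℕ∞) := by
  exact_mod_cast (WithTop.coe_lt_top j : (j : ℕ∞) < ⊤)

private lemma nat_le_inf {j : ℕ} : (j : WithTop ℕ∞) ≤ ((⊤ : ℕ∞) : WithTop ℕ∞) := nat_lt_inf.le

private lemma one_le_inf : (1 : WithTop ℕ∞) ≤ ((⊤ : ℕ∞) : WithTop ℕ∞) := by
  exact_mod_cast (le_top : (1 : ℕ∞) ≤ ⊤)

private lemma aux_comp_add {E F : Type*} [NormedAddCommGroup E] [NormedSpace ℝ E]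
    [NormedAddCommGroup F] [NormedSpace ℝ F]
    (f : E → F) (hf : ContDiff ℝ (⊤ : ℕ∞) f) (c : E) (j : ℕ) :
    ∀ y, iteratedFDeriv ℝ j (fun v => f (c + v)) y = iteratedFDeriv ℝ j f (c + y) := by
  induction j with
  | zero => intro y; ext m; simp
  | succ j ih =>
    intro y
    ext m
    rw [iteratedFDeriv_succ_apply_left, iteratedFDeriv_succ_apply_left]
    have h1 : (iteratedFDeriv ℝ j fun v => f (c + v))
        = (iteratedFDeriv ℝ j f) ∘ (fun y => c + y) := funext ih
    have hd : DifferentiableAt ℝ (iteratedFDeriv ℝ j f) (c + y) :=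
      (hf.differentiable_iteratedFDeriv nat_lt_inf).differentiableAt
    have h2 : fderiv ℝ (iteratedFDeriv ℝ j fun v => f (c + v)) y
        = fderiv ℝ (iteratedFDeriv ℝ j f) (c + y) := by
      rw [h1]
      have hda : DifferentiableAt ℝ (fun y : E => c + y) y :=
        (differentiable_id.const_add c).differentiableAt
      have h3 := fderiv_comp (𝕜 := ℝ) y hd hda
      rw [h3, fderiv_const_add, fderiv_id', ContinuousLinearMap.comp_id]
    rw [h2]


private lemma glueRight {h g : ℝ → ℂ} (hh : ContDiff ℝ (⊤:ℕ∞) h) (hg : ContDiff ℝ (⊤:ℕ∞) g)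
    (heq : EqOn h g (Ioi 0)) (k : ℕ) : iteratedDeriv k h 0 = iteratedDeriv k g 0 := by
  have h2 : EqOn (iteratedDeriv k h) (iteratedDeriv k g) (Ioi 0) :=
    heq.iteratedDeriv_of_isOpen isOpen_Ioi k
  have ch : Tendsto (iteratedDeriv k h) (𝓝[>] 0) (𝓝 (iteratedDeriv k h 0)) :=
    ((hh.differentiable_iteratedDeriv k nat_lt_inf).continuous.continuousAt).tendsto.mono_left
      nhdsWithin_le_nhds
  have cg : Tendsto (iteratedDeriv k g) (𝓝[>] 0) (𝓝 (iteratedDeriv k g 0)) :=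
    ((hg.differentiable_iteratedDeriv k nat_lt_inf).continuous.continuousAt).tendsto.mono_left
      nhdsWithin_le_nhds
  have : Tendsto (iteratedDeriv k h) (𝓝[>] 0) (𝓝 (iteratedDeriv k g 0)) := by
    refine cg.congr' ?_
    filter_upwards [self_mem_nhdsWithin] with s hs using (h2 hs).symm
  exact tendsto_nhds_unique ch this

private lemma glueLeft {h g : ℝ → ℂ} (hh : ContDiff ℝ (⊤:ℕ∞) h) (hg : ContDiff ℝ (⊤:ℕ∞) g)
    (heq : EqOn h g (Iio 0)) (k : ℕ) : iteratedDeriv k h 0 = iteratedDeriv k g 0 := by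
  have hneg : ContDiff ℝ (⊤:ℕ∞) (fun s : ℝ => -s) := contDiff_neg
  have key := glueRight (hh.comp hneg) (hg.comp hneg)
    (fun s hs => heq (by simpa using hs : -s ∈ Iio 0)) k
  simp only [Function.comp_def] at key
  have e1 := iteratedDeriv_comp_neg k h 0
  have e2 := iteratedDeriv_comp_neg k g 0
  rw [neg_zero] at e1 e2
  have : ((-1:ℝ))^k • iteratedDeriv k h 0 = ((-1:ℝ))^k • iteratedDeriv k g 0 := by
    rw [← e1, ← e2]; exact key
  exact smul_right_injective ℂ (pow_ne_zero _ (by norm_num : (-1:ℝ) ≠ 0)) this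

private lemma polyMulDeriv (g : ℝ → ℂ) (hg : ContDiff ℝ (⊤:ℕ∞) g) (m : ℕ) :
    deriv (fun s : ℝ => ((s^(m+1) : ℝ) : ℂ) * g s)
      = fun s : ℝ => ((s^m : ℝ):ℂ) * (((m:ℂ)+1) * g s + (s:ℂ) * deriv g s) := by
  funext s
  have h1 : HasDerivAt (fun s : ℝ => ((s^(m+1):ℝ):ℂ)) ((((m+1) * s^m : ℝ)):ℂ) s := by
    simpa using (hasDerivAt_pow (m+1) s).ofReal_comp
  have h2 : HasDerivAt g (deriv g s) s := ((hg.differentiable (by simp)) s).hasDerivAt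
  have h3 : HasDerivAt (fun s : ℝ => ((s^(m+1):ℝ):ℂ) * g s) _ s := h1.mul h2
  rw [h3.deriv]
  push_cast
  ring

private lemma polyMulSmooth (g : ℝ → ℂ) (hg : ContDiff ℝ (⊤:ℕ∞) g) (m : ℕ) :
    ContDiff ℝ (⊤:ℕ∞) (fun s : ℝ => ((m:ℂ)+1) * g s + (s:ℂ) * deriv g s) := by
  have hg' : ContDiff ℝ (⊤:ℕ∞) (deriv g) := (contDiff_infty_iff_deriv.mp hg).2
  exact (contDiff_const.mul hg).add ((Complex.ofRealCLM.contDiff).mul hg')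

private lemma polyMulVanish : ∀ (j : ℕ) (m : ℕ) (g : ℝ → ℂ), ContDiff ℝ (⊤:ℕ∞) g → j < m →
    iteratedDeriv j (fun s : ℝ => ((s^m : ℝ):ℂ) * g s) 0 = 0 := by
  intro j
  induction j with
  | zero =>
    intro m g hg hm
    simp [iteratedDeriv_zero, zero_pow (by omega : m ≠ 0)]
  | succ j ih =>
    intro m g hg hm
    obtain ⟨m', rfl⟩ : ∃ m', m = m' + 1 := ⟨m-1, by omega⟩
    rw [iteratedDeriv_succ', polyMulDeriv g hg m']
    exact ih m' _ (polyMulSmooth g hg m') (by omega)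

private lemma polyMulDiag : ∀ (m : ℕ) (g : ℝ → ℂ), ContDiff ℝ (⊤:ℕ∞) g →
    iteratedDeriv m (fun s : ℝ => ((s^m:ℝ):ℂ) * g s) 0 = (m.factorial : ℂ) * g 0 := by
  intro m
  induction m with
  | zero => intro g hg; simp [iteratedDeriv_zero]
  | succ m ih =>
    intro g hg
    rw [iteratedDeriv_succ', polyMulDeriv g hg m, ih _ (polyMulSmooth g hg m)]
    simp [Nat.factorial_succ]
    ring

private lemma diagDeriv {E : Type*} [NormedAddCommGroup E] [NormedSpace ℝ E]
    {γ : E → ℂ} (hγ : ContDiff ℝ (⊤:ℕ∞) γ) (X : E) (j : ℕ) :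
    iteratedDeriv j (fun s : ℝ => γ (s • X)) 0 = iteratedFDeriv ℝ j γ 0 (fun _ => X) := by
  have h1 : (fun s : ℝ => γ (s • X)) = γ ∘ (ContinuousLinearMap.toSpanSingleton ℝ X) := by
    funext s; simp [ContinuousLinearMap.toSpanSingleton_apply]
  rw [iteratedDeriv_eq_iteratedFDeriv, h1,
    ContinuousLinearMap.iteratedFDeriv_comp_right _ hγ 0 nat_le_inf]
  simp [ContinuousLinearMap.toSpanSingleton_apply]

set_option maxHeartbeats 1000000 in
/-- If `a ∈ ℕ`, `a ≥ 1`, and `f : ℝ^p × ℝ^n × ℝ → ℂ` is smooth and homogeneous of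
degree `a` for the zoom action, then with `γ₊(x, X) = f(x, X, 1)`, `γ₋(x, X) = f(x, X, −1)`:
(i) all iterated derivatives at `0` of `Y ↦ γ±(x, Y)` of order `j ≤ a − 1` vanish;
(ii) for `j ≥ a`, `D^j γ₊(x,0)[X,…,X] = (−1)^{j−a} D^j γ₋(x,0)[X,…,X]`;
(iii) `f(x, X, 0) = (1/a!)·D^a γ₊(x,0)[X,…,X]`. -/
theorem stmt_7 (p n : ℕ) (a : ℕ) (ha : 1 ≤ a)
    (f : (Fin p → ℝ) × (Fin n → ℝ) × ℝ → ℂ)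
    (hf : ContDiff ℝ (⊤ : ℕ∞) f)
    (hhom : ∀ s : ℝ, 0 < s → ∀ (x : Fin p → ℝ) (X : Fin n → ℝ) (t : ℝ),
      f (x, s • X, s⁻¹ * t) = (s : ℂ) ^ (a : ℂ) * f (x, X, t)) :
    (∀ (x : Fin p → ℝ) (j : ℕ), j ≤ a - 1 →
        iteratedFDeriv ℝ j (fun Y : Fin n → ℝ => f (x, Y, 1)) 0 = 0 ∧
        iteratedFDeriv ℝ j (fun Y : Fin n → ℝ => f (x, Y, -1)) 0 = 0) ∧
    (∀ (x : Fin p → ℝ) (j : ℕ), a ≤ j → ∀ X : Fin n → ℝ,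
        iteratedFDeriv ℝ j (fun Y : Fin n → ℝ => f (x, Y, 1)) 0 (fun _ => X)
          = (-1 : ℂ) ^ (j - a) *
            iteratedFDeriv ℝ j (fun Y : Fin n → ℝ => f (x, Y, -1)) 0 (fun _ => X)) ∧
    (∀ (x : Fin p → ℝ) (X : Fin n → ℝ),
        f (x, X, 0) = (1 / (a.factorial : ℂ)) *
          iteratedFDeriv ℝ a (fun Y : Fin n → ℝ => f (x, Y, 1)) 0 (fun _ => X)) := by
  have hf' : ContDiff ℝ (⊤:ℕ∞) f := hf.of_le (by simp)
  have hhom' : ∀ s : ℝ, 0 < s → ∀ (x : Fin p → ℝ) (X : Fin n → ℝ) (t : ℝ),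
      f (x, s • X, s⁻¹ * t) = ((s^a : ℝ) : ℂ) * f (x, X, t) := by
    intro s hs x X t
    rw [hhom s hs x X t, Complex.cpow_natCast]
    push_cast
    ring
  -- smoothness of slices
  have hsmY : ∀ (x : Fin p → ℝ) (c : ℝ), ContDiff ℝ (⊤:ℕ∞) (fun Y : Fin n → ℝ => f (x, Y, c)) :=
    fun x c => hf'.comp (ContDiff.prodMk contDiff_const (ContDiff.prodMk contDiff_id contDiff_const))
  have hsmS : ∀ (x : Fin p → ℝ) (X : Fin n → ℝ),
      ContDiff ℝ (⊤:ℕ∞) (fun s : ℝ => f (x, X, s)) :=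
    fun x X => hf'.comp (ContDiff.prodMk contDiff_const (ContDiff.prodMk contDiff_const contDiff_id))
  have hsmLine : ∀ (x : Fin p → ℝ) (X : Fin n → ℝ) (c : ℝ),
      ContDiff ℝ (⊤:ℕ∞) (fun s : ℝ => f (x, s • X, c)) :=
    fun x X c => hf'.comp (ContDiff.prodMk contDiff_const
      ((ContinuousLinearMap.toSpanSingleton ℝ X).contDiff.prodMk contDiff_const))
  have hsmH : ∀ (x : Fin p → ℝ) (X : Fin n → ℝ),
      ContDiff ℝ (⊤:ℕ∞) (fun s : ℝ => ((s^a : ℝ) : ℂ) * f (x, X, s)) :=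
    fun x X => ((Complex.ofRealCLM.contDiff).comp (contDiff_id.pow a)).mul (hsmS x X)
  -- key identity for γ₊
  have keyP : ∀ (x : Fin p → ℝ) (X : Fin n → ℝ) (j : ℕ),
      iteratedFDeriv ℝ j (fun Y : Fin n → ℝ => f (x, Y, 1)) 0 (fun _ => X)
        = iteratedDeriv j (fun s : ℝ => ((s^a : ℝ) : ℂ) * f (x, X, s)) 0 := by
    intro x X j
    rw [← diagDeriv (hsmY x 1) X j]
    refine glueRight (hsmLine x X 1) (hsmH x X) ?_ j
    intro s hs
    have h := hhom' s hs x X s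
    rw [inv_mul_cancel₀ (ne_of_gt hs)] at h
    exact h
  -- key identity for γ₋
  have keyM : ∀ (x : Fin p → ℝ) (X : Fin n → ℝ) (j : ℕ),
      iteratedFDeriv ℝ j (fun Y : Fin n → ℝ => f (x, Y, -1)) 0 (fun _ => X)
        = (-1:ℂ)^(a+j) * iteratedDeriv j (fun s : ℝ => ((s^a : ℝ) : ℂ) * f (x, X, s)) 0 := by
    intro x X j
    have hsm1 : ContDiff ℝ (⊤:ℕ∞) (fun s : ℝ => f (x, (-s) • X, -1)) :=
      (hsmLine x X (-1)).comp contDiff_neg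
    have e1 : iteratedDeriv j (fun s : ℝ => ((s^a : ℝ) : ℂ) * f (x, X, s)) 0
        = iteratedDeriv j (fun s : ℝ => (-1:ℂ)^a * f (x, (-s) • X, -1)) 0 := by
      refine glueLeft (hsmH x X) (contDiff_const.mul hsm1) ?_ j
      intro s hs
      have hs' : (0:ℝ) < -s := by simpa using hs
      have h := hhom' (-s) hs' x X s
      rw [show (-s)⁻¹ * s = -1 by rw [inv_neg, neg_mul, inv_mul_cancel₀ (show s < 0 from hs).ne]] at h
      show ((s^a:ℝ):ℂ) * f (x, X, s) = (-1:ℂ)^a * f (x, (-s) • X, -1)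
      rw [h, ← mul_assoc]
      congr 1
      push_cast
      rw [← mul_pow, neg_mul_neg, one_mul]
    have e2 : iteratedDeriv j (fun s : ℝ => (-1:ℂ)^a * f (x, (-s) • X, -1)) 0
        = (-1:ℂ)^a * iteratedDeriv j (fun s : ℝ => f (x, (-s) • X, -1)) 0 := by
      rw [iteratedDeriv_eq_iteratedFDeriv, iteratedDeriv_eq_iteratedFDeriv]
      rw [show (fun s : ℝ => (-1:ℂ)^a * f (x, (-s) • X, -1))
          = ((-1:ℂ)^a • fun s : ℝ => f (x, (-s) • X, -1)) from by funext s; simp]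
      rw [iteratedFDeriv_const_smul_apply (hsm1.of_le nat_le_inf).contDiffAt]
      simp
    have e3 : iteratedDeriv j (fun s : ℝ => f (x, (-s) • X, -1)) 0
        = ((-1:ℝ))^j • iteratedDeriv j (fun s : ℝ => f (x, s • X, -1)) 0 := by
      have := iteratedDeriv_comp_neg j (fun s : ℝ => f (x, s • X, -1)) 0
      rw [neg_zero] at this
      exact this
    have e4 : iteratedDeriv j (fun s : ℝ => f (x, s • X, -1)) 0
        = iteratedFDeriv ℝ j (fun Y : Fin n → ℝ => f (x, Y, -1)) 0 (fun _ => X) :=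
      diagDeriv (hsmY x (-1)) X j
    have hsmul : ((-1:ℝ))^j • (iteratedFDeriv ℝ j (fun Y : Fin n → ℝ => f (x, Y, -1)) 0
        (fun _ => X)) = ((-1:ℂ))^j * (iteratedFDeriv ℝ j (fun Y : Fin n → ℝ => f (x, Y, -1)) 0
        (fun _ => X)) := by
      rw [Complex.real_smul]
      push_cast
      ring
    have hcancel : ∀ z : ℂ, ((-1:ℂ))^(a+j) * ((-1:ℂ)^a * ((-1:ℂ)^j * z)) = z := by
      intro z
      rw [← mul_assoc, ← mul_assoc, ← pow_add, ← pow_add,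
        show a + j + a + j = 2*(a+j) from by ring, pow_mul]
      norm_num
    rw [e1, e2, e3, e4, hsmul]
    exact (hcancel _).symm
  refine ⟨?_, ?_, ?_⟩
  · -- part (i)
    intro x j hj
    have hja : j < a := by omega
    -- the embedding Y ↦ (0, Y, 0)
    set ι : (Fin n → ℝ) →L[ℝ] ((Fin p → ℝ) × (Fin n → ℝ) × ℝ) :=
      (0 : (Fin n → ℝ) →L[ℝ] (Fin p → ℝ)).prod
        ((ContinuousLinearMap.id ℝ (Fin n → ℝ)).prod 0) with hιdef
    have hι : ∀ Y, ι Y = (0, Y, 0) := fun Y => rfl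
    have hιnorm : ‖ι‖ ≤ 1 := by
      refine ContinuousLinearMap.opNorm_le_bound _ zero_le_one (fun Y => ?_)
      rw [hι]
      simp [Prod.norm_def]
    have hrep : ∀ (c : ℝ) (k : ℕ), iteratedFDeriv ℝ k (fun Y : Fin n → ℝ => f (x, Y, c)) 0
        = (iteratedFDeriv ℝ k f (x, 0, c)).compContinuousLinearMap (fun _ => ι) := by
      intro c k
      have h1 : (fun Y : Fin n → ℝ => f (x, Y, c)) = (fun v => f ((x, 0, c) + v)) ∘ ι := by
        funext Y
        simp [hι, Prod.mk_add_mk]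
      have hsm3 : ContDiff ℝ (⊤:ℕ∞)
          (fun v : (Fin p → ℝ) × (Fin n → ℝ) × ℝ => f ((x, 0, c) + v)) :=
        hf'.comp (contDiff_const.add contDiff_id)
      rw [h1, ContinuousLinearMap.iteratedFDeriv_comp_right ι hsm3 0 nat_le_inf, map_zero,
        aux_comp_add f hf' (x, 0, c) k 0, add_zero]
    have hbound : ∃ C : ℝ, 0 ≤ C ∧ ∀ c ∈ Icc (-1:ℝ) 1,
        ‖iteratedFDeriv ℝ j (fun Y : Fin n → ℝ => f (x, Y, c)) 0‖ ≤ C := by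
      have hcont : ContinuousOn (fun c : ℝ => iteratedFDeriv ℝ j f (x, 0, c)) (Icc (-1) 1) :=
        ((hf'.continuous_iteratedFDeriv nat_le_inf).comp
          (continuous_const.prodMk (continuous_const.prodMk continuous_id))).continuousOn
      obtain ⟨C, hC⟩ := isCompact_Icc.exists_bound_of_continuousOn hcont
      have hC0 : (0:ℝ) ≤ C := le_trans (norm_nonneg _) (hC 0 (by norm_num))
      refine ⟨C, hC0, fun c hc => ?_⟩
      rw [hrep c j]
      have h5 : (∏ _i : Fin j, ‖ι‖) ≤ 1 :=
        Finset.prod_le_one (fun _ _ => norm_nonneg _) (fun _ _ => hιnorm)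
      have h6 := ContinuousMultilinearMap.norm_compContinuousLinearMap_le
        (iteratedFDeriv ℝ j f (x, 0, c)) (fun _ : Fin j => ι)
      have h7 : ‖iteratedFDeriv ℝ j f (x, 0, c)‖ * (∏ _i : Fin j, ‖ι‖) ≤ C * 1 :=
        mul_le_mul (hC c hc) h5 (Finset.prod_nonneg fun _ _ => norm_nonneg _) hC0
      calc ‖(iteratedFDeriv ℝ j f (x, 0, c)).compContinuousLinearMap (fun _ => ι)‖
          ≤ ‖iteratedFDeriv ℝ j f (x, 0, c)‖ * ∏ _i : Fin j, ‖ι‖ := h6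
        _ ≤ C * 1 := h7
        _ = C := mul_one C
    obtain ⟨C, hC0, hC⟩ := hbound
    have main : ∀ ε : ℝ, ε = 1 ∨ ε = -1 →
        iteratedFDeriv ℝ j (fun Y : Fin n → ℝ => f (x, Y, ε)) 0 = 0 := by
      intro ε hε
      set T := iteratedFDeriv ℝ j (fun Y : Fin n → ℝ => f (x, Y, ε)) 0 with hT
      have hTle : ∀ s : ℝ, s ∈ Ioc (0:ℝ) 1 → ‖T‖ ≤ C * s^(a-j) := by
        intro s hsIoc
        have hs0 : (0:ℝ) < s := hsIoc.1
        set Ls : (Fin n → ℝ) →L[ℝ] (Fin n → ℝ) := s⁻¹ • ContinuousLinearMap.id ℝ _ with hLs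
        have heqfun : (fun Y : Fin n → ℝ => f (x, Y, ε))
            = fun Y => ((s^a:ℝ):ℂ) • ((fun Z : Fin n → ℝ => f (x, Z, ε*s)) ∘ Ls) Y := by
          funext Y
          have h := hhom' s hs0 x (s⁻¹ • Y) (ε * s)
          rw [smul_smul, mul_inv_cancel₀ hs0.ne', one_smul,
            show s⁻¹ * (ε * s) = ε from by field_simp] at h
          simp only [Function.comp_apply, hLs, ContinuousLinearMap.smul_apply,
            ContinuousLinearMap.id_apply, smul_eq_mul]
          rw [h]
        have hsm2 : ContDiff ℝ (⊤:ℕ∞) ((fun Z : Fin n → ℝ => f (x, Z, ε*s)) ∘ Ls) :=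
          (hsmY x (ε*s)).comp Ls.contDiff
        have hTeq : T = ((s^a:ℝ):ℂ) •
            ((iteratedFDeriv ℝ j (fun Z : Fin n → ℝ => f (x, Z, ε*s)) (Ls 0)).compContinuousLinearMap
              (fun _ => Ls)) := by
          rw [hT, heqfun, iteratedFDeriv_const_smul_apply' (hsm2.of_le nat_le_inf).contDiffAt,
            ContinuousLinearMap.iteratedFDeriv_comp_right Ls (hsmY x (ε*s)) 0 nat_le_inf]
        have hLs0 : Ls 0 = 0 := map_zero Ls
        have hLsnorm : ‖Ls‖ ≤ s⁻¹ := by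
          rw [hLs]
          refine le_trans (ContinuousLinearMap.opNorm_smul_le _ _) ?_
          rw [norm_inv, Real.norm_eq_abs, abs_of_pos hs0]
          calc s⁻¹ * ‖ContinuousLinearMap.id ℝ (Fin n → ℝ)‖ ≤ s⁻¹ * 1 := by
                exact mul_le_mul_of_nonneg_left ContinuousLinearMap.norm_id_le
                  (inv_nonneg.mpr hs0.le)
            _ = s⁻¹ := mul_one _
        have hmem : ε * s ∈ Icc (-1:ℝ) 1 := by
          rcases hε with rfl | rfl
          · constructor <;> nlinarith [hsIoc.2]
          · constructor <;> nlinarith [hsIoc.2]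
        have hnorm : ‖T‖ ≤ (s^a) * (C * (s⁻¹)^j) := by
          rw [hTeq, hLs0]
          have h1 : ‖(((s^a:ℝ)):ℂ)‖ = s^a := by
            rw [Complex.norm_real, Real.norm_eq_abs, abs_of_pos (pow_pos hs0 a)]
          refine le_trans (ContinuousMultilinearMap.opNorm_smul_le _ _) ?_
          rw [h1]
          refine mul_le_mul_of_nonneg_left ?_ (pow_pos hs0 a).le
          have h6 := ContinuousMultilinearMap.norm_compContinuousLinearMap_le
            (iteratedFDeriv ℝ j (fun Z : Fin n → ℝ => f (x, Z, ε*s)) 0) (fun _ : Fin j => Ls)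
          refine le_trans h6 ?_
          have h8 : (∏ _i : Fin j, ‖Ls‖) ≤ (s⁻¹)^j := by
            calc (∏ _i : Fin j, ‖Ls‖) ≤ ∏ _i : Fin j, s⁻¹ :=
                  Finset.prod_le_prod (fun _ _ => norm_nonneg _) (fun _ _ => hLsnorm)
              _ = (s⁻¹)^j := by simp
          exact mul_le_mul (hC (ε*s) hmem) h8
            (Finset.prod_nonneg fun _ _ => norm_nonneg _) hC0
        have harith : (s^a) * (C * (s⁻¹)^j) = C * s^(a-j) := by
          rw [inv_pow, show a = (a - j) + j from by omega, pow_add, Nat.add_sub_cancel]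
          field_simp
        rw [harith] at hnorm
        exact hnorm
      have htend : Tendsto (fun s : ℝ => C * s^(a-j)) (𝓝[>] 0) (𝓝 0) := by
        have h1 : Tendsto (fun s : ℝ => C * s^(a-j)) (𝓝 0) (𝓝 (C * (0:ℝ)^(a-j))) :=
          ((continuous_const.mul (continuous_pow (a-j))).tendsto 0)
        rw [zero_pow (by omega : a - j ≠ 0), mul_zero] at h1
        exact h1.mono_left nhdsWithin_le_nhds
      have hev : ∀ᶠ s in 𝓝[>] (0:ℝ), ‖T‖ ≤ C * s^(a-j) := by
        filter_upwards [Ioc_mem_nhdsGT_of_mem (by norm_num : (0:ℝ) ∈ Ico (0:ℝ) 1)] with s hs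
        exact hTle s hs
      have : ‖T‖ ≤ 0 := ge_of_tendsto htend hev
      exact norm_le_zero_iff.mp this
    exact ⟨main 1 (Or.inl rfl), main (-1) (Or.inr rfl)⟩
  · -- part (ii)
    intro x j hja X
    rw [keyP x X j, keyM x X j, ← mul_assoc, ← pow_add,
      show j - a + (a + j) = 2*j from by omega, pow_mul]
    norm_num
  · -- part (iii)
    intro x X
    rw [keyP x X a, polyMulDiag a (fun s : ℝ => f (x, X, s)) (hsmS x X)]
    have hfac : (a.factorial : ℂ) ≠ 0 := Nat.cast_ne_zero.mpr a.factorial_ne_zero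
    field_simp
end

section
/- Let m ∈ ℕ and let f : ℝ^p × ℝ^n × ℝ → ℂ be infinitely differentiable and homogeneous of degree −m for the zoom action (f(x, sX, s⁻¹t) = s^(−m) f(x, X, t) for all s > 0). Set γ₊(x, X) = f(x, X, 1) and γ₋(x, X) = f(x, X, −1). Then: (i) for every x, every j ∈ ℕ, and every X ∈ ℝ^n, D_Y^j γ₊(x, 0)[X, …, X] = (−1)^{j+m} · D_Y^j γ₋(x, 0)[X, …, X]; (ii) if m ≥ 1 then f(x, X, 0) = 0 for all x and X, and if m = 0 then f(x, X, 0) = γ₊(x, 0) for all x and X. -/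
open Filter Topology Set


private lemma aux_one_le : ((⊤:ℕ∞) : WithTop ℕ∞) ≠ 0 := by exact_mod_cast (ENat.top_ne_zero : (⊤:ℕ∞) ≠ 0)

private lemma aux_smooth_iter {F : ℝ → ℂ} (hF : ContDiff ℝ (⊤:ℕ∞) F) (k : ℕ) :
    ContDiff ℝ (⊤:ℕ∞) (iteratedDeriv k F) := by
  rw [iteratedDeriv_eq_iterate]
  exact ContDiff.iterate_deriv k hF

private lemma aux_sub {F G : ℝ → ℂ} (hF : ContDiff ℝ (⊤:ℕ∞) F) (hG : ContDiff ℝ (⊤:ℕ∞) G)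
    (k : ℕ) (u : ℝ) :
    iteratedDeriv k (fun v => F v - G v) u = iteratedDeriv k F u - iteratedDeriv k G u := by
  induction k generalizing u with
  | zero => simp
  | succ k ih =>
    rw [iteratedDeriv_succ, iteratedDeriv_succ, iteratedDeriv_succ]
    have : deriv (iteratedDeriv k fun v => F v - G v) u
        = deriv (fun v => iteratedDeriv k F v - iteratedDeriv k G v) u := by
      apply Filter.EventuallyEq.deriv_eq
      filter_upwards with v using ih v
    rw [this]
    exact deriv_sub ((aux_smooth_iter hF k).differentiable aux_one_le u)
      ((aux_smooth_iter hG k).differentiable aux_one_le u)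

/-- Localization: two smooth functions agreeing on an open set with `0` in its closure
have the same iterated derivatives at `0`. -/
private lemma aux_loc {F G : ℝ → ℂ} (hF : ContDiff ℝ (⊤:ℕ∞) F) (hG : ContDiff ℝ (⊤:ℕ∞) G)
    {s : Set ℝ} (hs : IsOpen s) (h0 : (0:ℝ) ∈ closure s)
    (heq : ∀ u ∈ s, F u = G u) (k : ℕ) :
    iteratedDeriv k F 0 = iteratedDeriv k G 0 := by
  have key : ∀ k : ℕ, ∀ u ∈ s, iteratedDeriv k F u = iteratedDeriv k G u := by
    intro k
    induction k with
    | zero => simpa using heq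
    | succ k ih =>
      intro u hu
      rw [iteratedDeriv_succ, iteratedDeriv_succ]
      apply Filter.EventuallyEq.deriv_eq
      filter_upwards [hs.mem_nhds hu] with v hv using ih v hv
  have hne : (𝓝[s] (0:ℝ)).NeBot := mem_closure_iff_nhdsWithin_neBot.mp h0
  have t1 : Tendsto (iteratedDeriv k F) (𝓝[s] (0:ℝ)) (𝓝 (iteratedDeriv k F 0)) :=
    (((aux_smooth_iter hF k).continuous).continuousAt).tendsto.mono_left nhdsWithin_le_nhds
  have t2 : Tendsto (iteratedDeriv k G) (𝓝[s] (0:ℝ)) (𝓝 (iteratedDeriv k G 0)) :=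
    (((aux_smooth_iter hG k).continuous).continuousAt).tendsto.mono_left nhdsWithin_le_nhds
  have t1' : Tendsto (iteratedDeriv k G) (𝓝[s] (0:ℝ)) (𝓝 (iteratedDeriv k F 0)) := by
    refine t1.congr' ?_
    filter_upwards [self_mem_nhdsWithin] with v hv using key k v hv
  exact tendsto_nhds_unique t1' t2

/-- Leibniz rule for multiplication by the identity. -/
private lemma aux_mul_id {δ : ℝ → ℂ} (hδ : ContDiff ℝ (⊤:ℕ∞) δ) (k : ℕ) (u : ℝ) :
    iteratedDeriv (k+1) (fun v : ℝ => (v:ℂ) * δ v) u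
      = (u:ℂ) * iteratedDeriv (k+1) δ u + (k+1 : ℂ) * iteratedDeriv k δ u := by
  have hid : ∀ w : ℝ, HasDerivAt (fun v : ℝ => (v:ℂ)) 1 w := by
    intro w
    simpa using (hasDerivAt_id w).ofReal_comp
  induction k generalizing u with
  | zero =>
    rw [iteratedDeriv_one]
    have h := ((hid u).fun_mul ((hδ.differentiable aux_one_le u).hasDerivAt)).deriv
    rw [h]
    simp [iteratedDeriv_succ, iteratedDeriv_zero]
    ring
  | succ k ih =>
    rw [iteratedDeriv_succ]
    have h1 : deriv (iteratedDeriv (k+1) fun v : ℝ => (v:ℂ) * δ v) u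
        = deriv (fun v : ℝ => (v:ℂ) * iteratedDeriv (k+1) δ v
            + (k+1 : ℂ) * iteratedDeriv k δ v) u := by
      apply Filter.EventuallyEq.deriv_eq
      filter_upwards with v using ih v
    rw [h1]
    have d1 : HasDerivAt (fun v : ℝ => (v:ℂ) * iteratedDeriv (k+1) δ v)
        ((u:ℂ) * iteratedDeriv (k+2) δ u + iteratedDeriv (k+1) δ u) u := by
      have hd : HasDerivAt (iteratedDeriv (k+1) δ) (iteratedDeriv (k+2) δ u) u := by
        have := ((aux_smooth_iter hδ (k+1)).differentiable aux_one_le u).hasDerivAt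
        rwa [show iteratedDeriv (k+2) δ u = deriv (iteratedDeriv (k+1) δ) u from
          by rw [iteratedDeriv_succ]] 
      simpa [mul_comm, add_comm] using (hid u).fun_mul hd
    have d2 : HasDerivAt (fun v : ℝ => (k+1 : ℂ) * iteratedDeriv k δ v)
        ((k+1 : ℂ) * iteratedDeriv (k+1) δ u) u := by
      have hd : HasDerivAt (iteratedDeriv k δ) (iteratedDeriv (k+1) δ u) u := by
        have := ((aux_smooth_iter hδ k).differentiable aux_one_le u).hasDerivAt
        rwa [show iteratedDeriv (k+1) δ u = deriv (iteratedDeriv k δ) u from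
          by rw [iteratedDeriv_succ]]
      exact hd.const_mul _
    rw [(d1.fun_add d2).deriv]
    push_cast
    ring
  

private lemma aux_kill {δ : ℝ → ℂ} (hδ : ContDiff ℝ (⊤:ℕ∞) δ)
    (h : ∀ k, iteratedDeriv k (fun v : ℝ => (v:ℂ) * δ v) 0 = 0) :
    ∀ k, iteratedDeriv k δ 0 = 0 := by
  intro k
  have h1 := h (k+1)
  rw [aux_mul_id hδ k 0] at h1
  have hk : ((k:ℂ)+1) ≠ 0 := by
    exact Nat.cast_add_one_ne_zero k
  have h2 : ((k:ℂ)+1) * iteratedDeriv k δ 0 = 0 := by simpa using h1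
  exact (mul_eq_zero.mp h2).resolve_left hk

private lemma aux_killpow (m : ℕ) : ∀ (δ : ℝ → ℂ), ContDiff ℝ (⊤:ℕ∞) δ →
    (∀ k, iteratedDeriv k (fun v : ℝ => (v:ℂ)^m * δ v) 0 = 0) →
    ∀ k, iteratedDeriv k δ 0 = 0 := by
  induction m with
  | zero => intro δ hδ h k; simpa using h k
  | succ m ih =>
    intro δ hδ h k
    have hδ' : ContDiff ℝ (⊤:ℕ∞) (fun v : ℝ => (v:ℂ)^m * δ v) := by
      exact ((Complex.ofRealCLM.contDiff.pow m).mul hδ)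
    have h' : ∀ k, iteratedDeriv k (fun v : ℝ => (v:ℂ) * ((v:ℂ)^m * δ v)) 0 = 0 := by
      intro k
      have : (fun v : ℝ => (v:ℂ) * ((v:ℂ)^m * δ v))
          = fun v : ℝ => (v:ℂ)^(m+1) * δ v := by
        funext v; ring
      rw [this]; exact h k
    exact ih δ hδ (aux_kill hδ' h') k

private lemma aux_cmul {F : ℝ → ℂ} (hF : ContDiff ℝ (⊤:ℕ∞) F) (c : ℂ) (k : ℕ) (u : ℝ) :
    iteratedDeriv k (fun v => c * F v) u = c * iteratedDeriv k F u := by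
  induction k generalizing u with
  | zero => simp
  | succ k ih =>
    rw [iteratedDeriv_succ, iteratedDeriv_succ]
    have h1 : deriv (iteratedDeriv k fun v => c * F v) u
        = deriv (fun v => c * iteratedDeriv k F v) u := by
      apply Filter.EventuallyEq.deriv_eq
      filter_upwards with v using ih v
    rw [h1, deriv_const_mul _ ((aux_smooth_iter hF k).differentiable aux_one_le u)]

private lemma aux_core {m : ℕ} {φp φm g : ℝ → ℂ}
    (hφp : ContDiff ℝ (⊤:ℕ∞) φp) (hφm : ContDiff ℝ (⊤:ℕ∞) φm) (hg : ContDiff ℝ (⊤:ℕ∞) g)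
    (hp : ∀ u : ℝ, 0 < u → (u:ℂ)^m * φp u = g u)
    (hm : ∀ u : ℝ, u < 0 → (u:ℂ)^m * ((-1:ℂ)^m * φm (-u)) = g u)
    (j : ℕ) : iteratedDeriv j φp 0 = (-1:ℂ)^(j+m) * iteratedDeriv j φm 0 := by
  set ψ : ℝ → ℂ := fun u => (-1:ℂ)^m * φm (-u) with hψdef
  have hψ : ContDiff ℝ (⊤:ℕ∞) ψ := contDiff_const.mul (hφm.comp contDiff_neg)
  have hmono : ContDiff ℝ (⊤:ℕ∞) (fun v : ℝ => (v:ℂ)^m) :=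
    Complex.ofRealCLM.contDiff.pow m
  have hA : ContDiff ℝ (⊤:ℕ∞) (fun v : ℝ => (v:ℂ)^m * φp v) := hmono.mul hφp
  have hB : ContDiff ℝ (⊤:ℕ∞) (fun v : ℝ => (v:ℂ)^m * ψ v) := hmono.mul hψ
  have hAg : ∀ k, iteratedDeriv k (fun v : ℝ => (v:ℂ)^m * φp v) 0 = iteratedDeriv k g 0 := by
    intro k
    refine aux_loc hA hg isOpen_Ioi ?_ (fun u hu => hp u hu) k
    rw [closure_Ioi]; exact Set.self_mem_Ici
  have hBg : ∀ k, iteratedDeriv k (fun v : ℝ => (v:ℂ)^m * ψ v) 0 = iteratedDeriv k g 0 := by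
    intro k
    refine aux_loc hB hg isOpen_Iio ?_ (fun u hu => hm u hu) k
    rw [closure_Iio]; exact Set.self_mem_Iic
  have hδ : ContDiff ℝ (⊤:ℕ∞) (fun v => φp v - ψ v) := hφp.sub hψ
  have hzero : ∀ k, iteratedDeriv k (fun v : ℝ => (v:ℂ)^m * (φp v - ψ v)) 0 = 0 := by
    intro k
    have heq : (fun v : ℝ => (v:ℂ)^m * (φp v - ψ v))
        = fun v : ℝ => (v:ℂ)^m * φp v - (v:ℂ)^m * ψ v := by
      funext v; ring
    rw [heq, aux_sub hA hB k 0, hAg k, hBg k, sub_self]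
  have hfin := aux_killpow m _ hδ hzero j
  rw [aux_sub hφp hψ j 0, sub_eq_zero] at hfin
  rw [hfin, hψdef]
  rw [aux_cmul (show ContDiff ℝ (⊤:ℕ∞) (fun u : ℝ => φm (-u)) from hφm.comp contDiff_neg)
    ((-1:ℂ)^m) j 0]
  have hneg := iteratedDeriv_comp_neg j φm (0:ℝ)
  rw [neg_zero] at hneg
  rw [hneg, pow_add]
  simp only [Complex.real_smul]
  push_cast
  ring



/-- If `m ∈ ℕ` and `f : ℝ^p × ℝ^n × ℝ → ℂ` is smooth and homogeneous of degree
`−m` for the zoom action, then with `γ₊(x, X) = f(x, X, 1)` and `γ₋(x, X) = f(x, X, −1)`: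
(i) `D^j γ₊(x,0)[X,…,X] = (−1)^{j+m} D^j γ₋(x,0)[X,…,X]` for all `j`;
(ii) if `m ≥ 1` then `f(x, X, 0) = 0`, and if `m = 0` then `f(x, X, 0) = γ₊(x, 0)`. -/
theorem stmt_9 (p n : ℕ) (m : ℕ)
    (f : (Fin p → ℝ) × (Fin n → ℝ) × ℝ → ℂ)
    (hf : ContDiff ℝ (⊤ : ℕ∞) f)
    (hhom : ∀ s : ℝ, 0 < s → ∀ (x : Fin p → ℝ) (X : Fin n → ℝ) (t : ℝ),
      f (x, s • X, s⁻¹ * t) = (s : ℂ) ^ (-(m : ℂ)) * f (x, X, t)) :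
    (∀ (x : Fin p → ℝ) (j : ℕ) (X : Fin n → ℝ),
        iteratedFDeriv ℝ j (fun Y : Fin n → ℝ => f (x, Y, 1)) 0 (fun _ => X)
          = (-1 : ℂ) ^ (j + m) *
            iteratedFDeriv ℝ j (fun Y : Fin n → ℝ => f (x, Y, -1)) 0 (fun _ => X)) ∧
    (1 ≤ m → ∀ (x : Fin p → ℝ) (X : Fin n → ℝ), f (x, X, 0) = 0) ∧
    (m = 0 → ∀ (x : Fin p → ℝ) (X : Fin n → ℝ), f (x, X, 0) = f (x, 0, 1)) := by
  have hf' : ContDiff ℝ (⊤:ℕ∞) f := hf.of_le (by simp)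
  -- rewrite homogeneity with natural powers
  have hhom' : ∀ s : ℝ, 0 < s → ∀ (x : Fin p → ℝ) (X : Fin n → ℝ) (t : ℝ),
      (s : ℂ) ^ m * f (x, s • X, s⁻¹ * t) = f (x, X, t) := by
    intro s hs x X t
    have h := hhom s hs x X t
    rw [Complex.cpow_neg, Complex.cpow_natCast] at h
    have hpow : ((s:ℂ)) ^ m ≠ 0 := pow_ne_zero _ (by exact_mod_cast hs.ne')
    rw [h, mul_inv_cancel_left₀ hpow]
  refine ⟨?_, ?_, ?_⟩
  · -- part (i)
    intro x j X
    set γp : (Fin n → ℝ) → ℂ := fun Y => f (x, Y, 1) with hγpdef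
    set γm : (Fin n → ℝ) → ℂ := fun Y => f (x, Y, -1) with hγmdef
    have hγp : ContDiff ℝ (⊤:ℕ∞) γp :=
      hf'.comp (contDiff_const.prodMk (contDiff_id.prodMk contDiff_const))
    have hγm : ContDiff ℝ (⊤:ℕ∞) γm :=
      hf'.comp (contDiff_const.prodMk (contDiff_id.prodMk contDiff_const))
    set L : ℝ →L[ℝ] (Fin n → ℝ) := ContinuousLinearMap.toSpanSingleton ℝ X with hLdef
    have hL0 : L 0 = 0 := by simp [hLdef, ContinuousLinearMap.toSpanSingleton_apply]
    have hL1 : L 1 = X := by simp [hLdef, ContinuousLinearMap.toSpanSingleton_apply]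
    have key : ∀ (γ : (Fin n → ℝ) → ℂ), ContDiff ℝ (⊤:ℕ∞) γ →
        iteratedFDeriv ℝ j γ 0 (fun _ => X) = iteratedDeriv j (γ ∘ L) 0 := by
      intro γ hγ
      have hcomp := L.iteratedFDeriv_comp_right hγ (0:ℝ) (i := j) (by exact_mod_cast le_top)
      rw [iteratedDeriv_eq_iteratedFDeriv, hcomp,
        ContinuousMultilinearMap.compContinuousLinearMap_apply, hL0]
      simp [hL1]
    have hφp : ContDiff ℝ (⊤:ℕ∞) (γp ∘ L) := hγp.comp L.contDiff
    have hφm : ContDiff ℝ (⊤:ℕ∞) (γm ∘ L) := hγm.comp L.contDiff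
    have hg : ContDiff ℝ (⊤:ℕ∞) (fun u : ℝ => f (x, X, u)) :=
      hf'.comp (contDiff_const.prodMk (contDiff_const.prodMk contDiff_id))
    have hp : ∀ u : ℝ, 0 < u → (u:ℂ)^m * (γp ∘ L) u = f (x, X, u) := by
      intro u hu
      have h := hhom' u hu x X u
      rw [inv_mul_cancel₀ hu.ne'] at h
      simpa [Function.comp, hLdef, ContinuousLinearMap.toSpanSingleton_apply, hγpdef] using h
    have hm : ∀ u : ℝ, u < 0 → (u:ℂ)^m * ((-1:ℂ)^m * (γm ∘ L) (-u)) = f (x, X, u) := by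
      intro u hu
      have hs : (0:ℝ) < -u := by linarith
      have h := hhom' (-u) hs x X u
      have ht : (-u)⁻¹ * u = -1 := by
        field_simp [hu.ne]
      rw [ht] at h
      have : ((-u : ℝ) : ℂ) ^ m = (u:ℂ)^m * (-1:ℂ)^m := by
        push_cast; ring
      rw [this, mul_assoc] at h
      simpa [Function.comp, hLdef, ContinuousLinearMap.toSpanSingleton_apply, hγmdef] using h
    rw [key γp hγp, key γm hγm]
    exact aux_core hφp hφm hg hp hm j
  · -- part (ii), m ≥ 1
    intro hm1 x X
    have hev : ∀ s : ℝ, s ∈ Set.Ioi (0:ℝ) → (s:ℂ)^m * f (x, s • X, 0) = f (x, X, 0) := by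
      intro s hs
      have h := hhom' s hs x X 0
      rwa [mul_zero] at h
    have hcont : Filter.Tendsto (fun s : ℝ => (s:ℂ)^m * f (x, s • X, 0)) (𝓝[>] (0:ℝ))
        (𝓝 ((0:ℂ)^m * f (x, (0:ℝ) • X, 0))) := by
      apply Filter.Tendsto.mono_left _ nhdsWithin_le_nhds
      apply Filter.Tendsto.mul
      · exact ((Complex.continuous_ofReal.pow m).tendsto 0).congr (fun s => rfl) |>.comp
          Filter.tendsto_id |>.congr (fun s => rfl)
      · exact ((hf'.continuous.comp (by continuity : Continuous
          (fun s : ℝ => ((x, s • X, (0:ℝ)) : (Fin p → ℝ) × (Fin n → ℝ) × ℝ)))).tendsto 0)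
    have hz : ((0:ℂ)^m * f (x, (0:ℝ) • X, 0)) = 0 := by
      rw [zero_pow (by omega : m ≠ 0), zero_mul]
    rw [hz] at hcont
    have hconst : Filter.Tendsto (fun s : ℝ => (s:ℂ)^m * f (x, s • X, 0)) (𝓝[>] (0:ℝ))
        (𝓝 (f (x, X, 0))) := by
      refine Filter.Tendsto.congr' ?_ tendsto_const_nhds
      filter_upwards [self_mem_nhdsWithin] with s hs using (hev s hs).symm
    exact tendsto_nhds_unique hconst hcont
  · -- part (ii), m = 0
    intro hm0 x X
    subst hm0
    have hev : ∀ s : ℝ, s ∈ Set.Ioi (0:ℝ) → f (x, s • X, 0) = f (x, X, 0) := by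
      intro s hs
      have h := hhom' s hs x X 0
      rwa [mul_zero, pow_zero, one_mul] at h
    have h1 : f (x, (0:Fin n → ℝ), 0) = f (x, X, 0) := by
      have hcont : Filter.Tendsto (fun s : ℝ => f (x, s • X, 0)) (𝓝[>] (0:ℝ))
          (𝓝 (f (x, (0:ℝ) • X, 0))) := by
        apply Filter.Tendsto.mono_left _ nhdsWithin_le_nhds
        exact ((hf'.continuous.comp (by continuity : Continuous
          (fun s : ℝ => ((x, s • X, (0:ℝ)) : (Fin p → ℝ) × (Fin n → ℝ) × ℝ)))).tendsto 0)
      have hconst : Filter.Tendsto (fun s : ℝ => f (x, s • X, 0)) (𝓝[>] (0:ℝ))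
          (𝓝 (f (x, X, 0))) := by
        refine Filter.Tendsto.congr' ?_ tendsto_const_nhds
        filter_upwards [self_mem_nhdsWithin] with s hs using (hev s hs).symm
      simpa [zero_smul] using tendsto_nhds_unique hcont hconst
    have hev2 : ∀ t : ℝ, t ∈ Set.Ioi (0:ℝ) → f (x, (0:Fin n → ℝ), t) = f (x, 0, 1) := by
      intro t ht
      have h := hhom' t⁻¹ (inv_pos.mpr ht) x 0 1
      rw [pow_zero, one_mul, smul_zero, inv_inv, mul_one] at h
      exact h
    have h2 : f (x, (0:Fin n → ℝ), 0) = f (x, 0, 1) := by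
      have hcont : Filter.Tendsto (fun t : ℝ => f (x, (0:Fin n → ℝ), t)) (𝓝[>] (0:ℝ))
          (𝓝 (f (x, (0:Fin n → ℝ), 0))) := by
        apply Filter.Tendsto.mono_left _ nhdsWithin_le_nhds
        exact ((hf'.continuous.comp (by continuity : Continuous
          (fun t : ℝ => ((x, (0:Fin n → ℝ), t) : (Fin p → ℝ) × (Fin n → ℝ) × ℝ)))).tendsto 0)
      have hconst : Filter.Tendsto (fun t : ℝ => f (x, (0:Fin n → ℝ), t)) (𝓝[>] (0:ℝ))
          (𝓝 (f (x, 0, 1))) := by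
        refine Filter.Tendsto.congr' ?_ tendsto_const_nhds
        filter_upwards [self_mem_nhdsWithin] with t ht using (hev2 t ht).symm
      exact tendsto_nhds_unique hcont hconst
    rw [← h1, h2]
end

section
/- Let b ∈ ℂ and let f : ℝ^n → ℂ be an infinitely differentiable function of temperate growth (f and each of its iterated derivatives is bounded by a polynomial) satisfying f(sx) = s^b·f(x) for all s > 0 and all x ∈ ℝ^n, where s^b = exp(b·log s). Let u be a tempered distribution on ℝ^n that is weakly homogeneous of degree a ∈ ℝ. Then the tempered distribution f·u, defined by (f·u)(φ) = u(f·φ) (note f·φ is Schwartz since f has temperate growth), is weakly homogeneous of degree a + Re(b): for every Schwartz φ there exists C > 0 with |(f·u)(φ_s)| ≤ C·s^(a + Re(b)) for all s > 0. -/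
/-!
Homogeneity of `f` turns the test function `f · φ_s` into `s^b (f · φ)_s`. Since `f · φ` is again
Schwartz, applying the bound of `u ∈ E^a` to it and pulling out `|s^b| = s^(Re b)` gives the claim.
-/

/-- A tempered distribution `w` on `ℝ^n` is weakly homogeneous of degree `a` (`w ∈ E^a`) if for
every Schwartz `φ` there is `C > 0` with `|w(φ_s)| ≤ C s^a` for all `s > 0`, where
`φ_s(x) = φ(s⁻¹x)`. -/
def WeaklyHomogeneous (n : ℕ) (w : SchwartzMap (Fin n → ℝ) ℂ →L[ℂ] ℂ) (a : ℝ) : Prop :=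
  ∀ φ : SchwartzMap (Fin n → ℝ) ℂ, ∃ C : ℝ, 0 < C ∧
    ∀ s : ℝ, 0 < s → ∀ φs : SchwartzMap (Fin n → ℝ) ℂ,
      (∀ x, φs x = φ (s⁻¹ • x)) → ‖w φs‖ ≤ C * s ^ a

open SchwartzMap

theorem apply_eq_cpow_mul_apply_inv_smul {E : Type*} [AddCommGroup E] [Module ℝ E]
    {f : E → ℂ} {b : ℂ} (hfhom : ∀ s : ℝ, 0 < s → ∀ x : E, f (s • x) = (s : ℂ) ^ b * f x)
    {s : ℝ} (hs : 0 < s) (x : E) : f x = (s : ℂ) ^ b * f (s⁻¹ • x) := by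
  simpa [smul_smul, hs.ne'] using hfhom s hs (s⁻¹ • x)

theorem inv_cpow_smul_apply_eq_mul_apply_inv_smul {E : Type*} [NormedAddCommGroup E] [NormedSpace ℝ E]
    {f : E → ℂ} {b : ℂ} (hfhom : ∀ s : ℝ, 0 < s → ∀ x : E, f (s • x) = (s : ℂ) ^ b * f x)
    (φ χ : 𝓢(E, ℂ)) {s : ℝ} (hs : 0 < s) (hχ : ∀ x, χ x = f x * φ (s⁻¹ • x)) (x : E) :
    (((s : ℂ) ^ b)⁻¹ • χ) x = φ (s⁻¹ • x) * f (s⁻¹ • x) := by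
  have hsb : (s : ℂ) ^ b ≠ 0 := by simp [Complex.cpow_eq_zero_iff, hs.ne']
  rw [smul_apply, hχ, apply_eq_cpow_mul_apply_inv_smul hfhom hs x, smul_eq_mul]
  field_simp

/-- If `f : ℝ^n → ℂ` is a smooth function of temperate growth which is
homogeneous of degree `b ∈ ℂ` for dilations (`f(sx) = s^b f(x)` for `s > 0`), and `u` is a
tempered distribution weakly homogeneous of degree `a ∈ ℝ`, then `f·u`, given by
`(f·u)(φ) = u(f·φ)`, is weakly homogeneous of degree `a + Re(b)`. -/
theorem stmt_12 (n : ℕ) (b : ℂ) (f : (Fin n → ℝ) → ℂ)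
    (hf : Function.HasTemperateGrowth f)
    (hfhom : ∀ s : ℝ, 0 < s → ∀ x : Fin n → ℝ, f (s • x) = (s : ℂ) ^ b * f x)
    (a : ℝ) (u : SchwartzMap (Fin n → ℝ) ℂ →L[ℂ] ℂ)
    (hu : WeaklyHomogeneous n u a) :
    ∀ φ : SchwartzMap (Fin n → ℝ) ℂ, ∃ C : ℝ, 0 < C ∧
      ∀ s : ℝ, 0 < s → ∀ χ : SchwartzMap (Fin n → ℝ) ℂ,
        (∀ x, χ x = f x * φ (s⁻¹ • x)) → ‖u χ‖ ≤ C * s ^ (a + b.re) := by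
  intro φ
  obtain ⟨C, hC, hu_le⟩ := hu (bilinLeftCLM (ContinuousLinearMap.mul ℝ ℂ) hf φ)
  refine ⟨C, hC, fun s hs χ hχ => ?_⟩
  have hsb : (s : ℂ) ^ b ≠ 0 := by simp [Complex.cpow_eq_zero_iff, hs.ne']
  have hdil := hu_le s hs _ (inv_cpow_smul_apply_eq_mul_apply_inv_smul hfhom φ χ hs hχ)
  calc ‖u χ‖ = s ^ b.re * ‖u (((s : ℂ) ^ b)⁻¹ • χ)‖ := by
        rw [← Complex.norm_cpow_eq_rpow_re_of_pos hs, ← norm_mul, map_smul, smul_eq_mul,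
          mul_inv_cancel_left₀ hsb]
    _ ≤ s ^ b.re * (C * s ^ a) := by gcongr
    _ = C * s ^ (a + b.re) := by rw [Real.rpow_add hs]; ring
end

section
/- Let u be a tempered distribution on ℝ^n, let a ∈ ℝ, and let χ : ℝ^n → ℝ be a smooth compactly supported function equal to 1 on a neighborhood of 0. Say that a tempered distribution w is in O^a if for every Schwartz φ there exists C > 0 with |w(φ_s)| ≤ C·s^a for all s ∈ (0, 1], where φ_s(x) = φ(s⁻¹x). Then u ∈ O^a if and only if the tempered distribution χ·u, defined by (χ·u)(φ) = u(χ·φ), is in O^a. -/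
open SchwartzMap Filter

set_option maxHeartbeats 1000000

noncomputable def dilEquiv (n : ℕ) (c : ℝ) (hc : c ≠ 0) : (Fin n → ℝ) ≃L[ℝ] (Fin n → ℝ) :=
  { LinearEquiv.smulOfNeZero ℝ _ c hc with
    continuous_toFun := continuous_const_smul c
    continuous_invFun := continuous_const_smul c⁻¹ }

lemma dilEquiv_apply (n : ℕ) (c : ℝ) (hc : c ≠ 0) (x : Fin n → ℝ) :
    dilEquiv n c hc x = c • x := rfl

lemma htg_of_compact {n : ℕ} {χ : (Fin n → ℝ) → ℝ} (hχ : ContDiff ℝ (⊤ : ℕ∞) χ)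
    (hχc : HasCompactSupport χ) : Function.HasTemperateGrowth χ := by
  refine ⟨hχ.of_le (by simp), fun k => ?_⟩
  obtain ⟨C, hC⟩ := (hχc.iteratedFDeriv k).exists_bound_of_continuous
    (hχ.continuous_iteratedFDeriv (by exact_mod_cast le_top))
  exact ⟨0, C, fun x => by simpa using hC x⟩

/-- Key estimate: the "far from zero" part `(1-χ)·φ(s⁻¹·)` is rapidly decreasing in `s`. -/
lemma key_bound (n : ℕ) (a : ℝ) (u : SchwartzMap (Fin n → ℝ) ℂ →L[ℂ] ℂ)
    (χ : (Fin n → ℝ) → ℝ) (hχ : ContDiff ℝ (⊤ : ℕ∞) χ) (hχc : HasCompactSupport χ)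
    (hχ1 : ∀ᶠ x in nhds (0 : Fin n → ℝ), χ x = 1) (φ : SchwartzMap (Fin n → ℝ) ℂ) :
    ∃ C : ℝ, 0 < C ∧ ∀ s : ℝ, s ∈ Set.Ioc (0:ℝ) 1 → ∀ θ : SchwartzMap (Fin n → ℝ) ℂ,
      (∀ x, θ x = (1 - (χ x : ℂ)) * φ (s⁻¹ • x)) → ‖u θ‖ ≤ C * s ^ a := by
  classical
  set P := schwartzSeminormFamily ℂ (Fin n → ℝ) ℂ with hP
  -- bound for the continuous functional u
  obtain ⟨F, Cu, -, hCu⟩ := Seminorm.bound_of_continuous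
    (schwartz_withSeminorms ℂ (Fin n → ℝ) ℂ)
    ((normSeminorm ℂ ℂ).comp (u : SchwartzMap (Fin n → ℝ) ℂ →ₗ[ℂ] ℂ))
    (u.continuous.norm)
  set N := F.sup (fun i => i.1 ⊔ i.2) with hN
  set e := 2 * ⌈|a|⌉₊ + N with he
  set E := e + N with hE
  -- radius where χ = 1
  obtain ⟨r, hr0, hrχ⟩ := Metric.eventually_nhds_iff.mp hχ1
  -- the cutoff complement
  set fχ : (Fin n → ℝ) → ℝ := fun x => 1 - χ x with hfχdef
  have hfχ : ContDiff ℝ ((⊤:ℕ∞) : WithTop ℕ∞) fχ := contDiff_const.sub (hχ.of_le (by simp))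
  -- uniform bounds on derivatives of fχ
  have hMf : ∀ i : ℕ, ∃ Mi : ℝ, 0 ≤ Mi ∧ ∀ x, ‖iteratedFDeriv ℝ i fχ x‖ ≤ Mi := by
    intro i
    obtain ⟨Ci, hCi⟩ := (hχc.iteratedFDeriv i).exists_bound_of_continuous
      (hχ.continuous_iteratedFDeriv (by exact_mod_cast le_top))
    have hCi0 : 0 ≤ Ci := le_trans (norm_nonneg _) (hCi 0)
    refine ⟨1 + Ci, by linarith, fun x => ?_⟩
    have hfeq : fχ = fun y => (fun _ => (1:ℝ)) y + (fun z => -χ z) y := by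
      funext y; simp [hfχdef, sub_eq_add_neg]
    have heq : iteratedFDeriv ℝ i fχ x =
        iteratedFDeriv ℝ i (fun _ => (1:ℝ)) x + iteratedFDeriv ℝ i (fun y => -χ y) x := by
      rw [hfeq]
      exact iteratedFDeriv_add_apply (contDiff_const (c := (1:ℝ))).contDiffAt ((hχ.of_le (by exact_mod_cast le_top)).neg).contDiffAt
    have hconst : ‖iteratedFDeriv ℝ i (fun _ => (1:ℝ)) x‖ ≤ 1 := by
      rcases Nat.eq_zero_or_pos i with hi | hi
      · subst hi; simp [norm_iteratedFDeriv_zero]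
      · rw [iteratedFDeriv_const_of_ne hi.ne']; simp
    have hneg : ‖iteratedFDeriv ℝ i (fun y => -χ y) x‖ ≤ Ci := by
      have hne : (fun y => -χ y) = -χ := rfl
      rw [hne, iteratedFDeriv_neg_apply, norm_neg]
      exact hCi x
    calc ‖iteratedFDeriv ℝ i fχ x‖ ≤ ‖iteratedFDeriv ℝ i (fun _ => (1:ℝ)) x‖ +
          ‖iteratedFDeriv ℝ i (fun y => -χ y) x‖ := heq ▸ norm_add_le _ _
      _ ≤ 1 + Ci := add_le_add hconst hneg
  choose M hM0 hM using hMf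
  set MM := ∑ i ∈ Finset.range (N+1), M i with hMM
  have hMM0 : 0 ≤ MM := Finset.sum_nonneg fun i _ => hM0 i
  have hMle : ∀ i, i ≤ N → M i ≤ MM := fun i hi =>
    Finset.single_le_sum (fun j _ => hM0 j) (Finset.mem_range.mpr (Nat.lt_succ_of_le hi))
  -- seminorm sums of φ
  set A := ∑ k ∈ Finset.range (N+1), ∑ j ∈ Finset.range (N+1),
      SchwartzMap.seminorm ℂ (k + E) j φ with hA
  have hA0 : 0 ≤ A := Finset.sum_nonneg fun k _ => Finset.sum_nonneg fun j _ => apply_nonneg _ _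
  have hAle : ∀ k, k ≤ N → ∀ j, j ≤ N → SchwartzMap.seminorm ℂ (k + E) j φ ≤ A := by
    intro k hk j hj
    calc SchwartzMap.seminorm ℂ (k + E) j φ
        ≤ ∑ j' ∈ Finset.range (N+1), SchwartzMap.seminorm ℂ (k + E) j' φ :=
          Finset.single_le_sum (fun j' _ => apply_nonneg _ _)
            (Finset.mem_range.mpr (Nat.lt_succ_of_le hj))
      _ ≤ A := Finset.single_le_sum
            (f := fun k' => ∑ j' ∈ Finset.range (N+1), SchwartzMap.seminorm ℂ (k' + E) j' φ)
            (fun k' _ => Finset.sum_nonneg fun j' _ => apply_nonneg _ _)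
            (Finset.mem_range.mpr (Nat.lt_succ_of_le hk))
  set D := (2:ℝ)^N * MM * A * (r⁻¹)^E + 1 with hD
  have hD1 : (1:ℝ) ≤ D := le_add_of_nonneg_left (by positivity)
  have hD0 : (0:ℝ) < D := lt_of_lt_of_le one_pos hD1
  refine ⟨(Cu + 1) * D, by positivity, ?_⟩
  rintro s ⟨hs0, hs1⟩ θ hθ
  -- the scaling map
  set c := s⁻¹ with hc
  have hc0 : 0 < c := inv_pos.mpr hs0
  set L : (Fin n → ℝ) →L[ℝ] (Fin n → ℝ) := c • ContinuousLinearMap.id ℝ (Fin n → ℝ) with hL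
  have hLapp : ∀ x, L x = c • x := fun x => rfl
  have hLnorm : ‖L‖ ≤ c := by
    refine ContinuousLinearMap.opNorm_le_bound _ hc0.le fun x => ?_
    rw [hLapp, norm_smul, Real.norm_eq_abs, abs_of_pos hc0]
  have hφL : ContDiff ℝ ((⊤:ℕ∞) : WithTop ℕ∞) (⇑φ ∘ ⇑L) := (φ.smooth ⊤).comp L.contDiff
  have hθfun : ⇑θ = fun x => fχ x • (⇑φ ∘ ⇑L) x := by
    funext x
    rw [hθ x]
    simp only [Function.comp_apply, hLapp, hfχdef, Complex.real_smul]
    push_cast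
    ring
  -- derivative bound for the dilated function
  have hder : ∀ (j : ℕ) (x : Fin n → ℝ),
      ‖iteratedFDeriv ℝ j (⇑φ ∘ ⇑L) x‖ ≤ c^j * ‖iteratedFDeriv ℝ j ⇑φ (L x)‖ := by
    intro j x
    rw [L.iteratedFDeriv_comp_right (φ.smooth ⊤) x (by exact_mod_cast le_top)]
    calc ‖(iteratedFDeriv ℝ j ⇑φ (L x)).compContinuousLinearMap fun _ => L‖
        ≤ ‖iteratedFDeriv ℝ j ⇑φ (L x)‖ * ∏ _i : Fin j, ‖L‖ :=
          ContinuousMultilinearMap.norm_compContinuousLinearMap_le _ _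
      _ ≤ c^j * ‖iteratedFDeriv ℝ j ⇑φ (L x)‖ := by
          rw [Finset.prod_const, Finset.card_univ, Fintype.card_fin, mul_comm]
          exact mul_le_mul_of_nonneg_right (pow_le_pow_left₀ (norm_nonneg _) hLnorm j)
            (norm_nonneg _)
  -- main pointwise estimate
  have hpt : ∀ k, k ≤ N → ∀ l, l ≤ N → ∀ x : Fin n → ℝ,
      ‖x‖^k * ‖iteratedFDeriv ℝ l ⇑θ x‖ ≤ D * s ^ e := by
    intro k hk l hl x
    by_cases hx : ‖x‖ < r
    · -- θ vanishes near x
      have hz : ⇑θ =ᶠ[nhds x] (fun _ => (0:ℂ)) := by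
        have hball : Metric.ball (0 : Fin n → ℝ) r ∈ nhds x := by
          refine Metric.isOpen_ball.mem_nhds ?_
          simpa [Metric.mem_ball, dist_zero_right] using hx
        filter_upwards [hball] with y hy
        have hy1 : χ y = 1 := hrχ (by simpa [Metric.mem_ball] using hy)
        rw [hθ y, hy1]
        simp
      have h0 : iteratedFDeriv ℝ l ⇑θ x = 0 := by
        have hz' : ⇑θ =ᶠ[nhdsWithin x Set.univ] (fun _ => (0:ℂ)) :=
          hz.filter_mono nhdsWithin_le_nhds
        have heq := Filter.EventuallyEq.iteratedFDerivWithin_eq (𝕜 := ℝ) hz' hz.self_of_nhds l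
        rw [iteratedFDerivWithin_univ, iteratedFDerivWithin_univ] at heq
        rw [heq, iteratedFDeriv_zero_fun]
        rfl
      rw [h0]
      simp only [norm_zero, mul_zero]
      positivity
    · push_neg at hx  -- r ≤ ‖x‖
      have hxr : 0 < ‖x‖ := lt_of_lt_of_le hr0 hx
      -- the per-index estimates
      have hsub : ∀ j, j ≤ N → ‖x‖^k * (c^j * ‖iteratedFDeriv ℝ j ⇑φ (L x)‖) ≤
          A * (r⁻¹)^E * s ^ e := by
        intro j hjN
        set X := ‖iteratedFDeriv ℝ j ⇑φ (L x)‖ with hX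
        have hX0 : 0 ≤ X := norm_nonneg _
        have hLx : ‖L x‖ = c * ‖x‖ := by
          rw [hLapp, norm_smul, Real.norm_eq_abs, abs_of_pos hc0]
        have hdec : ‖L x‖^(k+E) * X ≤ A :=
          le_trans (φ.le_seminorm ℂ (k+E) j (L x)) (hAle k hk j hjN)
        have h2 : c^j ≤ c^(k+E) * s ^ e := by
          have h1 : s^(k+E) ≤ s^(e+j) :=
            pow_le_pow_of_le_one hs0.le hs1 (by omega)
          have hcs : c * s = 1 := by rw [hc, inv_mul_cancel₀ hs0.ne']
          calc c^j = (c*s)^(k+E) * c^j := by rw [hcs, one_pow, one_mul]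
            _ = c^(k+E) * (s^(k+E) * c^j) := by rw [mul_pow]; ring
            _ ≤ c^(k+E) * (s^(e+j) * c^j) := by
                have := mul_le_mul_of_nonneg_right h1 (le_of_lt (pow_pos hc0 j))
                exact mul_le_mul_of_nonneg_left this (le_of_lt (pow_pos hc0 (k+E)))
            _ = c^(k+E) * (s^e * (s*c)^j) := by rw [pow_add, mul_pow]; ring
            _ = c^(k+E) * s ^ e := by
                rw [mul_comm s c, hcs, one_pow, mul_one]
        have h3 : (1:ℝ) ≤ (r⁻¹)^E * ‖x‖^E := by
          rw [← mul_pow]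
          refine one_le_pow₀ ?_
          calc (1:ℝ) = r⁻¹ * r := (inv_mul_cancel₀ hr0.ne').symm
            _ ≤ r⁻¹ * ‖x‖ := mul_le_mul_of_nonneg_left hx (inv_nonneg.mpr hr0.le)
        have hstar : ‖x‖^k * c^j ≤ (r⁻¹)^E * s ^ e * ‖L x‖^(k+E) := by
          calc ‖x‖^k * c^j ≤ ‖x‖^k * (c^(k+E) * s ^ e) :=
                mul_le_mul_of_nonneg_left h2 (by positivity)
            _ ≤ ((r⁻¹)^E * ‖x‖^E) * (‖x‖^k * (c^(k+E) * s ^ e)) :=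
                le_mul_of_one_le_left (by positivity) h3
            _ = (r⁻¹)^E * s ^ e * (c^(k+E) * ‖x‖^(k+E)) := by
                rw [pow_add (‖x‖) k E]; ring
            _ = (r⁻¹)^E * s ^ e * ‖L x‖^(k+E) := by rw [hLx, mul_pow]
        calc ‖x‖^k * (c^j * X) = (‖x‖^k * c^j) * X := by ring
          _ ≤ ((r⁻¹)^E * s ^ e * ‖L x‖^(k+E)) * X :=
              mul_le_mul_of_nonneg_right hstar hX0
          _ = (r⁻¹)^E * s ^ e * (‖L x‖^(k+E) * X) := by ring
          _ ≤ (r⁻¹)^E * s ^ e * A := by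
              exact mul_le_mul_of_nonneg_left hdec (by positivity)
          _ = A * (r⁻¹)^E * s ^ e := by ring
      -- Leibniz
      have hleib := norm_iteratedFDeriv_smul_le hfχ hφL x
        (by exact_mod_cast le_top : (l : WithTop ℕ∞) ≤ ((⊤:ℕ∞) : WithTop ℕ∞))
      rw [hθfun]
      have hbound : ‖x‖^k * ‖iteratedFDeriv ℝ l (fun y => fχ y • (⇑φ ∘ ⇑L) y) x‖ ≤
          ∑ i ∈ Finset.range (l+1), (l.choose i : ℝ) * (MM * (A * (r⁻¹)^E * s ^ e)) := by
        calc ‖x‖^k * ‖iteratedFDeriv ℝ l (fun y => fχ y • (⇑φ ∘ ⇑L) y) x‖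
            ≤ ‖x‖^k * ∑ i ∈ Finset.range (l+1), (l.choose i : ℝ) *
              ‖iteratedFDeriv ℝ i fχ x‖ * ‖iteratedFDeriv ℝ (l-i) (⇑φ ∘ ⇑L) x‖ :=
              mul_le_mul_of_nonneg_left hleib (by positivity)
          _ = ∑ i ∈ Finset.range (l+1), ‖x‖^k * ((l.choose i : ℝ) *
              ‖iteratedFDeriv ℝ i fχ x‖ * ‖iteratedFDeriv ℝ (l-i) (⇑φ ∘ ⇑L) x‖) := by
              rw [Finset.mul_sum]
          _ ≤ ∑ i ∈ Finset.range (l+1), (l.choose i : ℝ) * (MM * (A * (r⁻¹)^E * s ^ e)) := by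
              refine Finset.sum_le_sum fun i hi => ?_
              have hil : i ≤ l := Nat.lt_succ_iff.mp (Finset.mem_range.mp hi)
              have hiN : i ≤ N := le_trans hil hl
              have hjN : l - i ≤ N := le_trans (Nat.sub_le _ _) hl
              have hMi : ‖iteratedFDeriv ℝ i fχ x‖ ≤ MM := le_trans (hM i x) (hMle i hiN)
              have hsub2 : ‖x‖^k * ‖iteratedFDeriv ℝ (l-i) (⇑φ ∘ ⇑L) x‖ ≤
                  A * (r⁻¹)^E * s ^ e := by
                refine le_trans ?_ (hsub (l-i) hjN)
                exact mul_le_mul_of_nonneg_left (hder (l-i) x) (by positivity)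
              calc ‖x‖^k * ((l.choose i : ℝ) * ‖iteratedFDeriv ℝ i fχ x‖ *
                    ‖iteratedFDeriv ℝ (l-i) (⇑φ ∘ ⇑L) x‖)
                  = (l.choose i : ℝ) * (‖iteratedFDeriv ℝ i fχ x‖ *
                    (‖x‖^k * ‖iteratedFDeriv ℝ (l-i) (⇑φ ∘ ⇑L) x‖)) := by ring
                _ ≤ (l.choose i : ℝ) * (MM * (A * (r⁻¹)^E * s ^ e)) := by
                    refine mul_le_mul_of_nonneg_left ?_ (by positivity)
                    refine mul_le_mul hMi hsub2 (by positivity) hMM0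
      refine le_trans hbound ?_
      have hchoose : ∑ i ∈ Finset.range (l+1), (l.choose i : ℝ) = 2^l := by
        rw [← Nat.cast_sum]
        rw [Nat.sum_range_choose]
        push_cast
        ring
      rw [← Finset.sum_mul, hchoose]
      have h2l : (2:ℝ)^l ≤ 2^N := pow_le_pow_right₀ one_le_two hl
      calc (2:ℝ)^l * (MM * (A * (r⁻¹)^E * s ^ e))
          ≤ 2^N * (MM * (A * (r⁻¹)^E * s ^ e)) :=
            mul_le_mul_of_nonneg_right h2l (by positivity)
        _ = (2:ℝ)^N * MM * A * (r⁻¹)^E * s ^ e := by ring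
        _ ≤ D * s ^ e := by
            refine mul_le_mul_of_nonneg_right ?_ (by positivity)
            rw [hD]
            linarith
  -- from seminorms to the functional
  have hsup : (F.sup P) θ ≤ D * s ^ e := by
    refine Seminorm.finset_sup_apply_le (by positivity) fun i hi => ?_
    have hiN : i.1 ⊔ i.2 ≤ N := Finset.le_sup (f := fun i : ℕ×ℕ => i.1 ⊔ i.2) hi
    have hk : i.1 ≤ N := le_trans le_sup_left hiN
    have hl : i.2 ≤ N := le_trans le_sup_right hiN
    have : P i = SchwartzMap.seminorm ℂ i.1 i.2 := rfl
    rw [this]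
    exact SchwartzMap.seminorm_le_bound ℂ i.1 i.2 θ (by positivity) (hpt i.1 hk i.2 hl)
  have huθ : ‖u θ‖ ≤ (Cu : ℝ) * ((F.sup P) θ) := by
    have := hCu θ
    simp [Seminorm.comp_apply, hP, NNReal.smul_def] at this
    exact this
  have hse : (s:ℝ) ^ e ≤ s ^ a := by
    have hae : a ≤ (e : ℝ) := by
      calc a ≤ |a| := le_abs_self a
        _ ≤ (⌈|a|⌉₊ : ℝ) := Nat.le_ceil _
        _ ≤ (e : ℝ) := by
            rw [he]
            push_cast
            have h1 : (0:ℝ) ≤ (N:ℝ) := Nat.cast_nonneg N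
            have h2 : (0:ℝ) ≤ (⌈|a|⌉₊ : ℝ) := Nat.cast_nonneg _
            linarith
    calc (s:ℝ) ^ e = s ^ ((e : ℕ) : ℝ) := (Real.rpow_natCast s e).symm
      _ ≤ s ^ a := Real.rpow_le_rpow_of_exponent_ge hs0 hs1 hae
  calc ‖u θ‖ ≤ (Cu : ℝ) * ((F.sup P) θ) := huθ
    _ ≤ (Cu : ℝ) * (D * s ^ e) := mul_le_mul_of_nonneg_left hsup Cu.coe_nonneg
    _ ≤ ((Cu : ℝ) + 1) * (D * s ^ e) := by
        refine mul_le_mul_of_nonneg_right (by linarith [Cu.coe_nonneg]) (by positivity)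
    _ ≤ ((Cu : ℝ) + 1) * (D * s ^ a) := by
        refine mul_le_mul_of_nonneg_left ?_ (by positivity)
        exact mul_le_mul_of_nonneg_left hse hD0.le
    _ = ((Cu : ℝ) + 1) * D * s ^ a := by ring

/-- Weak homogeneity of degree `a` around the origin (`O^a`) is a local property
around `0`: for a tempered distribution `u` on `ℝ^n` and a smooth compactly supported cutoff
`χ` equal to `1` near `0`, `u ∈ O^a` iff `χ·u ∈ O^a`, where `(χ·u)(φ) = u(χ·φ)`. -/
theorem stmt_13 (n : ℕ) (a : ℝ) (u : SchwartzMap (Fin n → ℝ) ℂ →L[ℂ] ℂ)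
    (χ : (Fin n → ℝ) → ℝ) (hχ : ContDiff ℝ (⊤ : ℕ∞) χ) (hχc : HasCompactSupport χ)
    (hχ1 : ∀ᶠ x in nhds (0 : Fin n → ℝ), χ x = 1) :
    (∀ φ : SchwartzMap (Fin n → ℝ) ℂ, ∃ C : ℝ, 0 < C ∧
        ∀ s : ℝ, s ∈ Set.Ioc (0 : ℝ) 1 → ∀ φs : SchwartzMap (Fin n → ℝ) ℂ,
          (∀ x, φs x = φ (s⁻¹ • x)) → ‖u φs‖ ≤ C * s ^ a) ↔
    (∀ φ : SchwartzMap (Fin n → ℝ) ℂ, ∃ C : ℝ, 0 < C ∧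
        ∀ s : ℝ, s ∈ Set.Ioc (0 : ℝ) 1 → ∀ ψ : SchwartzMap (Fin n → ℝ) ℂ,
          (∀ x, ψ x = (χ x : ℂ) * φ (s⁻¹ • x)) → ‖u ψ‖ ≤ C * s ^ a) := by
  constructor
  · intro h φ
    obtain ⟨C₁, hC₁, H₁⟩ := h φ
    obtain ⟨C₂, hC₂, H₂⟩ := key_bound n a u χ hχ hχc hχ1 φ
    refine ⟨C₁ + C₂, by positivity, ?_⟩
    rintro s hs ψ hψ
    have hs0 : (0:ℝ) < s := hs.1
    set φs := SchwartzMap.compCLMOfContinuousLinearEquiv ℂ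
      (dilEquiv n s⁻¹ (inv_ne_zero hs0.ne')) φ with hφsdef
    have hφs : ∀ x, φs x = φ (s⁻¹ • x) := fun x => rfl
    have hθ : ∀ x, (φs - ψ) x = (1 - (χ x : ℂ)) * φ (s⁻¹ • x) := by
      intro x
      rw [SchwartzMap.sub_apply, hφs x, hψ x]
      ring
    have h1 := H₁ s hs φs hφs
    have h2 := H₂ s hs (φs - ψ) hθ
    have hsplit : u ψ = u φs - u (φs - ψ) := by rw [map_sub]; ring
    calc ‖u ψ‖ = ‖u φs - u (φs - ψ)‖ := by rw [hsplit]
      _ ≤ ‖u φs‖ + ‖u (φs - ψ)‖ := norm_sub_le _ _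
      _ ≤ C₁ * s ^ a + C₂ * s ^ a := add_le_add h1 h2
      _ = (C₁ + C₂) * s ^ a := by ring
  · intro h φ
    obtain ⟨C₁, hC₁, H₁⟩ := h φ
    obtain ⟨C₂, hC₂, H₂⟩ := key_bound n a u χ hχ hχc hχ1 φ
    refine ⟨C₁ + C₂, by positivity, ?_⟩
    rintro s hs φs hφs
    have hs0 : (0:ℝ) < s := hs.1
    set B : ℂ →L[ℝ] ℝ →L[ℝ] ℂ :=
      (ContinuousLinearMap.lsmul ℝ ℝ : ℝ →L[ℝ] ℂ →L[ℝ] ℂ).flip with hB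
    set ψ := SchwartzMap.bilinLeftCLM B (htg_of_compact hχ hχc) φs with hψdef
    have hψ : ∀ x, ψ x = (χ x : ℂ) * φ (s⁻¹ • x) := by
      intro x
      have : ψ x = χ x • φs x := rfl
      rw [this, hφs x, Complex.real_smul]
    have hθ : ∀ x, (φs - ψ) x = (1 - (χ x : ℂ)) * φ (s⁻¹ • x) := by
      intro x
      rw [SchwartzMap.sub_apply, hφs x, hψ x]
      ring
    have h1 := H₁ s hs ψ hψ
    have h2 := H₂ s hs (φs - ψ) hθ
    have hsplit : u φs = u ψ + u (φs - ψ) := by rw [map_sub]; ring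
    calc ‖u φs‖ = ‖u ψ + u (φs - ψ)‖ := by rw [hsplit]
      _ ≤ ‖u ψ‖ + ‖u (φs - ψ)‖ := norm_add_le _ _
      _ ≤ C₁ * s ^ a + C₂ * s ^ a := add_le_add h1 h2
      _ = (C₁ + C₂) * s ^ a := by ring
end

section
/- Let n ≥ 1, let ε ∈ (0, 1), and let f : ℝ^n → ℝ be a continuous bounded function with f ≥ 0. Define f_ε(x) = min(|x|^ε, f(x)) and f_{−ε}(x) = max(f(x) − |x|^ε, 0), where |x| is the Euclidean norm, so f = f_ε + f_{−ε}. Then for every Schwartz function φ : ℝ^n → ℂ there exists C > 0 such that for all s > 0: |∫_{ℝ^n} f_ε(x)·φ(s⁻¹x) dx| ≤ C·s^(n+ε) and |∫_{ℝ^n} f_{−ε}(x)·φ(s⁻¹x) dx| ≤ C·s^(n−ε). (That is, the distribution f_ε·dx is weakly homogeneous of degree n + ε and f_{−ε}·dx is weakly homogeneous of degree n − ε for the dilation action on ℝ^n.) -/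
/-! The substitution `x = s • y` turns the pairing with `φ (s⁻¹ • ·)` into
`s ^ n * ∫ g (s • y) * φ y`. Since `0 ≤ f_ε x ≤ ‖x‖ ^ ε`, this is at most
`s ^ (n + ε) * ∫ ‖y‖ ^ ε * ‖φ y‖`. The function `f_{−ε}` is bounded by an upper bound `M` of `f` and vanishes
outside the ball of radius `M ^ (1 / ε)`: for `s ≤ 1` its pairing is at most `M * s ^ n * ∫ ‖φ‖`,
and for `s ≥ 1` at most `M * sup ‖φ‖` times the volume of that ball; both are `O(s ^ (n − ε))`
because `0 ≤ n − ε ≤ n`. -/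

open MeasureTheory Metric Module
open scoped SchwartzMap

lemma Real.rpow_le_one_add_pow_natCeil {t a : ℝ} (ht : 0 ≤ t) (ha : 0 ≤ a) :
    t ^ a ≤ 1 + t ^ ⌈a⌉₊ := by
  rcases le_or_gt t 1 with h | h
  · linarith [Real.rpow_le_one ht h ha, pow_nonneg ht ⌈a⌉₊]
  · have : t ^ a ≤ t ^ (⌈a⌉₊ : ℝ) := Real.rpow_le_rpow_of_exponent_le h.le (Nat.le_ceil a)
    rw [Real.rpow_natCast] at this
    linarith

lemma SchwartzMap.integrable_rpow_mul {D V : Type*} [NormedAddCommGroup D] [NormedSpace ℝ D]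
    [MeasurableSpace D] [BorelSpace D] [SecondCountableTopology D]
    [NormedAddCommGroup V] [NormedSpace ℝ V] (μ : Measure D) [μ.HasTemperateGrowth]
    (φ : 𝓢(D, V)) {a : ℝ} (ha : 0 ≤ a) : Integrable (fun x ↦ ‖x‖ ^ a * ‖φ x‖) μ := by
  refine ((φ.integrable (μ := μ)).norm.add (φ.integrable_pow_mul μ ⌈a⌉₊)).mono'
    ((continuous_norm.rpow_const fun _ ↦ .inr ha).mul φ.continuous.norm).aestronglyMeasurable
    (.of_forall fun x ↦ ?_)
  have := Real.rpow_le_one_add_pow_natCeil (norm_nonneg x) ha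
  rw [Real.norm_of_nonneg (by positivity)]
  simp only [Pi.add_apply]
  nlinarith [norm_nonneg (φ x)]

variable {E : Type*} [NormedAddCommGroup E] [NormedSpace ℝ E] [MeasurableSpace E]

def IsWeaklyHomogeneous (μ : Measure E) (g : E → ℝ) (a : ℝ) : Prop :=
  ∀ φ : 𝓢(E, ℂ), ∃ C, 0 < C ∧ ∀ s : ℝ, 0 < s → ‖∫ x, (g x : ℂ) * φ (s⁻¹ • x) ∂μ‖ ≤ C * s ^ a

variable [FiniteDimensional ℝ E] [BorelSpace E] (μ : Measure E) [μ.IsAddHaarMeasure]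

lemma isWeaklyHomogeneous_of_abs_le_rpow {g : E → ℝ} {a : ℝ} (ha : 0 ≤ a)
    (hg : ∀ x, |g x| ≤ ‖x‖ ^ a) : IsWeaklyHomogeneous μ g (finrank ℝ E + a) := by
  intro φ
  set I := ∫ y, ‖y‖ ^ a * ‖φ y‖ ∂μ
  refine ⟨I + 1, by positivity, fun s hs ↦ ?_⟩
  have hbound : ∀ x, ‖(g x : ℂ) * φ (s⁻¹ • x)‖ ≤ s ^ a * (‖s⁻¹ • x‖ ^ a * ‖φ (s⁻¹ • x)‖) := by
    intro x
    have hx : ‖x‖ = s * ‖s⁻¹ • x‖ := by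
      rw [norm_smul, Real.norm_of_nonneg (inv_nonneg.2 hs.le), mul_inv_cancel_left₀ hs.ne']
    rw [norm_mul, Complex.norm_real, Real.norm_eq_abs, ← mul_assoc, ← Real.mul_rpow hs.le
      (norm_nonneg _), ← hx]
    exact mul_le_mul_of_nonneg_right (hg x) (norm_nonneg _)
  have hint := ((φ.integrable_rpow_mul μ ha).comp_smul (inv_ne_zero hs.ne')).const_mul (s ^ a)
  calc ‖∫ x, (g x : ℂ) * φ (s⁻¹ • x) ∂μ‖
      ≤ ∫ x, s ^ a * (‖s⁻¹ • x‖ ^ a * ‖φ (s⁻¹ • x)‖) ∂μ :=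
        norm_integral_le_of_norm_le hint (.of_forall hbound)
    _ = I * s ^ (finrank ℝ E + a : ℝ) := by
        rw [integral_const_mul, Measure.integral_comp_inv_smul_of_nonneg μ
          (fun y ↦ ‖y‖ ^ a * ‖φ y‖) hs.le, smul_eq_mul, Real.rpow_add hs, Real.rpow_natCast]
        ring
    _ ≤ (I + 1) * s ^ (finrank ℝ E + a : ℝ) := by gcongr; linarith

lemma isWeaklyHomogeneous_of_abs_le_of_eq_zero {g : E → ℝ} {M R b : ℝ}
    (hM : ∀ x, |g x| ≤ M) (hR : ∀ x, R < ‖x‖ → g x = 0) (hb : 0 ≤ b)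
    (hbE : b ≤ finrank ℝ E) : IsWeaklyHomogeneous μ g b := by
  intro φ
  have hM0 : 0 ≤ M := (abs_nonneg _).trans (hM 0)
  set K := SchwartzMap.seminorm ℝ 0 0 φ
  set A := M * K * μ.real (closedBall 0 R)
  set J := ∫ y, ‖φ y‖ ∂μ
  have hA : 0 ≤ A := by positivity
  have hJ : 0 ≤ J := integral_nonneg fun _ ↦ norm_nonneg _
  refine ⟨A + M * J + 1, by positivity, fun s hs ↦ ?_⟩
  have hnorm : ∀ x, ‖(g x : ℂ) * φ (s⁻¹ • x)‖ ≤ M * ‖φ (s⁻¹ • x)‖ := fun x ↦ by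
    rw [norm_mul, Complex.norm_real, Real.norm_eq_abs]
    exact mul_le_mul_of_nonneg_right (hM x) (norm_nonneg _)
  have hsmall : ‖∫ x, (g x : ℂ) * φ (s⁻¹ • x) ∂μ‖ ≤ M * J * s ^ (finrank ℝ E : ℝ) := by
    calc ‖∫ x, (g x : ℂ) * φ (s⁻¹ • x) ∂μ‖ ≤ ∫ x, M * ‖φ (s⁻¹ • x)‖ ∂μ :=
          norm_integral_le_of_norm_le ((φ.integrable.norm.comp_smul (inv_ne_zero hs.ne')).const_mul M)
            (.of_forall hnorm)
      _ = M * J * s ^ (finrank ℝ E : ℝ) := by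
          rw [integral_const_mul, Measure.integral_comp_inv_smul_of_nonneg μ (‖φ ·‖) hs.le,
            smul_eq_mul, Real.rpow_natCast]
          ring
  have hlarge : ‖∫ x, (g x : ℂ) * φ (s⁻¹ • x) ∂μ‖ ≤ A := by
    rw [← setIntegral_eq_integral_of_forall_compl_eq_zero (s := closedBall 0 R) fun x hx ↦ by
      rw [hR x (by simpa using hx), Complex.ofReal_zero, zero_mul]]
    exact norm_setIntegral_le_of_norm_le_const measure_closedBall_lt_top fun x _ ↦
      (hnorm x).trans (mul_le_mul_of_nonneg_left (φ.norm_le_seminorm ℝ _) hM0)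
  rcases le_or_gt s 1 with hs1 | hs1
  · have : s ^ (finrank ℝ E : ℝ) ≤ s ^ b := Real.rpow_le_rpow_of_exponent_ge hs hs1 hbE
    nlinarith [Real.rpow_nonneg hs.le b, mul_nonneg hM0 hJ]
  · have : 1 ≤ s ^ b := Real.one_le_rpow hs1.le hb
    nlinarith [mul_nonneg hM0 hJ]

lemma max_sub_rpow_eq_zero {y M t ε : ℝ} (hε : 0 < ε) (hM : 0 ≤ M) (hy : y ≤ M)
    (ht : M ^ ε⁻¹ < t) : max (y - t ^ ε) 0 = 0 := by
  have : M < t ^ ε := by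
    simpa [Real.rpow_inv_rpow hM hε.ne'] using
      Real.rpow_lt_rpow (Real.rpow_nonneg hM _) ht hε
  exact max_eq_right (by linarith)

theorem stmt_17_general (n : ℕ) (hn : 1 ≤ n) (ε : ℝ) (hε : 0 < ε) (hε1 : ε < 1)
    (f : EuclideanSpace ℝ (Fin n) → ℝ)
    (hfb : ∃ M : ℝ, ∀ x, f x ≤ M) (hf0 : ∀ x, 0 ≤ f x) :
    ∀ φ : SchwartzMap (EuclideanSpace ℝ (Fin n)) ℂ, ∃ C : ℝ, 0 < C ∧
      ∀ s : ℝ, 0 < s →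
        ‖∫ x : EuclideanSpace ℝ (Fin n),
            ((min (‖x‖ ^ ε) (f x) : ℝ) : ℂ) * φ (s⁻¹ • x)‖ ≤ C * s ^ ((n : ℝ) + ε) ∧
        ‖∫ x : EuclideanSpace ℝ (Fin n),
            ((max (f x - ‖x‖ ^ ε) 0 : ℝ) : ℂ) * φ (s⁻¹ • x)‖ ≤ C * s ^ ((n : ℝ) - ε) := by
  intro φ
  obtain ⟨M, hM⟩ := hfb
  have hM0 : 0 ≤ M := (hf0 0).trans (hM 0)
  have hd : finrank ℝ (EuclideanSpace ℝ (Fin n)) = n := finrank_euclideanSpace_fin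
  have hεn : ε ≤ n := hε1.le.trans (mod_cast hn)
  obtain ⟨C₁, hC₁, h₁⟩ := isWeaklyHomogeneous_of_abs_le_rpow volume
    (g := fun x ↦ min (‖x‖ ^ ε) (f x)) hε.le (fun x ↦ by rw [abs_of_nonneg (le_min (by positivity) (hf0 x))]; exact min_le_left _ _) φ
  obtain ⟨C₂, hC₂, h₂⟩ := isWeaklyHomogeneous_of_abs_le_of_eq_zero volume
    (g := fun x ↦ max (f x - ‖x‖ ^ ε) 0) (R := M ^ ε⁻¹) (b := n - ε)
    (fun x ↦ by
      rw [abs_of_nonneg (le_max_right _ _)]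
      exact max_le (by linarith [hM x, Real.rpow_nonneg (norm_nonneg x) ε]) hM0)
    (fun x hx ↦ max_sub_rpow_eq_zero hε hM0 (hM x) hx) (by linarith) (by rw [hd]; linarith) φ
  rw [hd] at h₁
  refine ⟨max C₁ C₂, lt_max_of_lt_left hC₁, fun s hs ↦ ⟨?_, ?_⟩⟩
  · exact (h₁ s hs).trans (by gcongr; exact le_max_left _ _)
  · exact (h₂ s hs).trans (by gcongr; exact le_max_right _ _)

/-- Let `n ≥ 1`, `ε ∈ (0,1)`, and let `f : ℝ^n → ℝ` be continuous, bounded and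
nonnegative. With `f_ε(x) = min(|x|^ε, f(x))` and `f_{−ε}(x) = max(f(x) − |x|^ε, 0)`
(Euclidean norm), the distribution `f_ε·dx` is weakly homogeneous of degree `n + ε` and
`f_{−ε}·dx` is weakly homogeneous of degree `n − ε` for the dilation action. -/
theorem stmt_17 (n : ℕ) (hn : 1 ≤ n) (ε : ℝ) (hε : 0 < ε) (hε1 : ε < 1)
    (f : EuclideanSpace ℝ (Fin n) → ℝ)
    (hfc : Continuous f) (hfb : ∃ M : ℝ, ∀ x, f x ≤ M) (hf0 : ∀ x, 0 ≤ f x) :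
    ∀ φ : SchwartzMap (EuclideanSpace ℝ (Fin n)) ℂ, ∃ C : ℝ, 0 < C ∧
      ∀ s : ℝ, 0 < s →
        ‖∫ x : EuclideanSpace ℝ (Fin n),
            ((min (‖x‖ ^ ε) (f x) : ℝ) : ℂ) * φ (s⁻¹ • x)‖ ≤ C * s ^ ((n : ℝ) + ε) ∧
        ‖∫ x : EuclideanSpace ℝ (Fin n),
            ((max (f x - ‖x‖ ^ ε) 0 : ℝ) : ℂ) * φ (s⁻¹ • x)‖ ≤ C * s ^ ((n : ℝ) - ε) :=
  stmt_17_general n hn ε hε hε1 f hfb hf0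
end

section
/- Let b ∈ ℝ with b < 0 and b ∉ ℤ, and set k = ⌈−b⌉ (so 0 < b + k < 1). Let g : (0, ∞) → ℂ be continuous and suppose there is C₀ > 0 with |g(s)| ≤ C₀·s^(b−1) for all s > 0. Define I₀ = g and, recursively for 1 ≤ j ≤ k, I_j(s) = −∫_s^∞ I_{j−1}(t) dt. Then: (i) for each 1 ≤ j ≤ k the defining integral converges absolutely for every s > 0, and there are constants C_j > 0 with |I_j(s)| ≤ C_j·s^(b+j−1) for all s > 0; (ii) for every smooth compactly supported f : ℝ → ℂ whose support is contained in (0, ∞), ∫₀^∞ f(s)·g(s) ds = (−1)^k·∫₀^∞ f^{(k)}(s)·I_k(s) ds, where f^{(k)} is the k-th derivative; (iii) for every smooth compactly supported f : ℝ → ℂ (support not necessarily avoiding 0), the function s ↦ f^{(k)}(s)·I_k(s) is Lebesgue integrable on (0, ∞). -/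
open MeasureTheory

/-- Iterated integration from infinity: `I₀ = g` and `I_{j+1}(s) = −∫_s^∞ I_j(t) dt`. -/
noncomputable def Iiter (g : ℝ → ℂ) : ℕ → ℝ → ℂ
  | 0 => g
  | (j + 1) => fun s => -∫ t in Set.Ioi s, Iiter g j t

open Set Filter Topology
open scoped ContDiff

private lemma tsupport_iteratedDeriv_subset' (f : ℝ → ℂ) (n : ℕ) :
    tsupport (iteratedDeriv n f) ⊆ tsupport f := by
  induction n with
  | zero => rw [iteratedDeriv_zero]
  | succ n ih =>
    rw [iteratedDeriv_succ]
    exact (closure_minimal support_deriv_subset (isClosed_tsupport _)).trans ih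

private lemma iteratedDeriv_zero_fun' (n : ℕ) : iteratedDeriv n (0 : ℝ → ℂ) = 0 := by
  induction n with
  | zero => rw [iteratedDeriv_zero]
  | succ n ih =>
    rw [iteratedDeriv_succ, ih]
    ext x
    exact deriv_const x 0

private lemma hasDerivAt_neg_integral_Ioi (h : ℝ → ℂ)
    (hcont : ContinuousOn h (Set.Ioi 0))
    (hint : ∀ a : ℝ, 0 < a → MeasureTheory.IntegrableOn h (Set.Ioi a))
    {s : ℝ} (hs : 0 < s) :
    HasDerivAt (fun u => -∫ t in Set.Ioi u, h t) (h s) s := by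
  set a := s / 2 with ha_def
  have ha : 0 < a := by positivity
  have has : a < s := by rw [ha_def]; linarith
  have hii : IntervalIntegrable h volume a s := by
    rw [intervalIntegrable_iff_integrableOn_Ioc_of_le has.le]
    exact (hint a ha).mono_set Set.Ioc_subset_Ioi_self
  have hd : HasDerivAt (fun u => (∫ t in a..u, h t) - ∫ t in Set.Ioi a, h t) (h s) s := by
    have := intervalIntegral.integral_hasDerivAt_right hii
      (hcont.stronglyMeasurableAtFilter isOpen_Ioi s hs)
      (hcont.continuousAt (isOpen_Ioi.mem_nhds hs))
    simpa using this.sub_const (∫ t in Set.Ioi a, h t)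
  refine hd.congr_of_eventuallyEq ?_
  filter_upwards [isOpen_Ioi.mem_nhds (show s ∈ Set.Ioi a from has)] with u hu
  have hu' : a < u := hu
  have hsplit : (∫ t in Set.Ioc a u, h t) + ∫ t in Set.Ioi u, h t = ∫ t in Set.Ioi a, h t := by
    rw [← MeasureTheory.setIntegral_union (Set.Ioc_disjoint_Ioi le_rfl) measurableSet_Ioi
      ((hint a ha).mono_set Set.Ioc_subset_Ioi_self) (hint u (ha.trans hu')),
      Set.Ioc_union_Ioi_eq_Ioi hu'.le]
  rw [intervalIntegral.integral_of_le hu'.le]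
  rw [← hsplit]
  ring

/-- Let `b < 0` with `b ∉ ℤ` and `k = ⌈−b⌉`. If `g : (0,∞) → ℂ` is continuous
with `|g(s)| ≤ C₀ s^(b−1)`, then: (i) each iterated integral from infinity `I_j` (`1 ≤ j ≤ k`)
converges absolutely and satisfies `|I_j(s)| ≤ C_j s^(b+j−1)`; (ii) for smooth compactly
supported `f` with support in `(0,∞)`, `∫₀^∞ f g = (−1)^k ∫₀^∞ f^{(k)} I_k`; (iii) for every
smooth compactly supported `f`, `s ↦ f^{(k)}(s)·I_k(s)` is integrable on `(0,∞)`. -/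
theorem stmt_19 (b : ℝ) (hb : b < 0) (hbz : ∀ z : ℤ, b ≠ (z : ℝ))
    (k : ℕ) (hk : k = ⌈-b⌉₊)
    (g : ℝ → ℂ) (hg : ContinuousOn g (Set.Ioi 0))
    (C₀ : ℝ) (hC₀ : 0 < C₀) (hgb : ∀ s : ℝ, 0 < s → ‖g s‖ ≤ C₀ * s ^ (b - 1)) :
    -- (i)
    (∀ j : ℕ, j < k →
      (∀ s : ℝ, 0 < s → IntegrableOn (Iiter g j) (Set.Ioi s)) ∧
      ∃ C : ℝ, 0 < C ∧ ∀ s : ℝ, 0 < s →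
        ‖Iiter g (j + 1) s‖ ≤ C * s ^ (b + (j + 1 : ℝ) - 1)) ∧
    -- (ii)
    (∀ f : ℝ → ℂ, ContDiff ℝ (⊤ : ℕ∞) f → HasCompactSupport f → tsupport f ⊆ Set.Ioi 0 →
      ∫ s in Set.Ioi (0 : ℝ), f s * g s
        = (-1 : ℂ) ^ k * ∫ s in Set.Ioi (0 : ℝ), iteratedDeriv k f s * Iiter g k s) ∧
    -- (iii)
    (∀ f : ℝ → ℂ, ContDiff ℝ (⊤ : ℕ∞) f → HasCompactSupport f →
      IntegrableOn (fun s => iteratedDeriv k f s * Iiter g k s) (Set.Ioi 0)) := by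
  have hk1 : 1 ≤ k := by
    rw [hk]
    exact Nat.one_le_iff_ne_zero.mpr (by
      intro h0
      have := Nat.ceil_eq_zero.mp h0
      linarith)
  have hbk_lt : ∀ j : ℕ, j < k → b + j < 0 := by
    intro j hj
    rw [hk] at hj
    have h1 : (j : ℝ) < -b := Nat.lt_ceil.mp hj
    linarith
  have hbk0 : 0 < b + k := by
    have h1 : -b ≤ (k : ℝ) := by rw [hk]; exact Nat.le_ceil _
    have h2 : -b ≠ (k : ℝ) := by
      intro h
      exact hbz (-(k : ℤ)) (by push_cast; linarith)
    have := lt_of_le_of_ne h1 h2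
    linarith
  have hbk1 : b + k - 1 < 0 := by
    have h := hbk_lt (k - 1) (Nat.sub_lt (by omega) one_pos)
    have hcast : ((k - 1 : ℕ) : ℝ) = (k : ℝ) - 1 := by
      rw [Nat.cast_sub hk1]; norm_num
    rw [hcast] at h
    linarith
  -- main induction: continuity and bounds
  have main : ∀ j : ℕ, j ≤ k → ContinuousOn (Iiter g j) (Set.Ioi 0) ∧
      ∃ C : ℝ, 0 < C ∧ ∀ s : ℝ, 0 < s → ‖Iiter g j s‖ ≤ C * s ^ (b + (j : ℝ) - 1) := by
    intro j
    induction j with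
    | zero => exact fun _ => ⟨hg, C₀, hC₀, fun s hs => by simpa [Iiter] using hgb s hs⟩
    | succ j ih =>
      intro hj
      obtain ⟨hcont, C, hC, hbound⟩ := ih (Nat.le_of_succ_le hj)
      have hjk : j < k := Nat.lt_of_succ_le hj
      have hneg : b + (j : ℝ) < 0 := hbk_lt j hjk
      have hexp : b + (j : ℝ) - 1 < -1 := by linarith
      have hint : ∀ a : ℝ, 0 < a → IntegrableOn (Iiter g j) (Set.Ioi a) := by
        intro a ha
        refine MeasureTheory.Integrable.mono'
          ((integrableOn_Ioi_rpow_of_lt hexp ha).const_mul C)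
          (((hcont.mono (Set.Ioi_subset_Ioi ha.le)).aestronglyMeasurable measurableSet_Ioi)) ?_
        filter_upwards [MeasureTheory.ae_restrict_mem measurableSet_Ioi] with t ht
        exact hbound t (ha.trans ht)
      have hDeriv : ∀ s : ℝ, 0 < s → HasDerivAt (Iiter g (j + 1)) (Iiter g j s) s :=
        fun s hs => hasDerivAt_neg_integral_Ioi _ hcont hint hs
      have hCpos : 0 < C / (-(b + (j : ℝ))) := div_pos hC (by linarith)
      refine ⟨fun s hs => (hDeriv s hs).continuousAt.continuousWithinAt,
        C / (-(b + (j : ℝ))), hCpos, ?_⟩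
      intro s hs
      have h1 : ‖Iiter g (j + 1) s‖ ≤ ∫ t in Set.Ioi s, C * t ^ (b + (j : ℝ) - 1) := by
        rw [show Iiter g (j + 1) s = -∫ t in Set.Ioi s, Iiter g j t from rfl, norm_neg]
        refine MeasureTheory.norm_integral_le_of_norm_le
          ((integrableOn_Ioi_rpow_of_lt hexp hs).const_mul C) ?_
        filter_upwards [MeasureTheory.ae_restrict_mem measurableSet_Ioi] with t ht
        exact hbound t (hs.trans ht)
      have h2 : ∫ t in Set.Ioi s, C * t ^ (b + (j : ℝ) - 1)
          = C / (-(b + (j : ℝ))) * s ^ (b + ((j + 1 : ℕ) : ℝ) - 1) := by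
        rw [MeasureTheory.integral_const_mul, integral_Ioi_rpow_of_lt hexp hs]
        have e1 : b + (j : ℝ) - 1 + 1 = b + (j : ℝ) := by ring
        have e2 : b + ((j + 1 : ℕ) : ℝ) - 1 = b + (j : ℝ) := by push_cast; ring
        rw [e1, e2]
        have hne : b + (j : ℝ) ≠ 0 := by linarith
        rw [neg_div, div_neg_eq_neg_div]
        ring
      rw [← h2]
      exact h1
  have hIcont : ∀ j, j ≤ k → ContinuousOn (Iiter g j) (Set.Ioi 0) := fun j hj => (main j hj).1
  have hint_all : ∀ j, j < k → ∀ s : ℝ, 0 < s → IntegrableOn (Iiter g j) (Set.Ioi s) := by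
    intro j hj s hs
    obtain ⟨C, hC, hbound⟩ := (main j hj.le).2
    have hexp : b + (j : ℝ) - 1 < -1 := by have := hbk_lt j hj; linarith
    refine MeasureTheory.Integrable.mono' ((integrableOn_Ioi_rpow_of_lt hexp hs).const_mul C)
      (((hIcont j hj.le).mono (Set.Ioi_subset_Ioi hs.le)).aestronglyMeasurable
        measurableSet_Ioi) ?_
    filter_upwards [MeasureTheory.ae_restrict_mem measurableSet_Ioi] with t ht
    exact hbound t (hs.trans ht)
  have hDeriv : ∀ j, j < k → ∀ s : ℝ, 0 < s → HasDerivAt (Iiter g (j + 1)) (Iiter g j s) s :=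
    fun j hj s hs => hasDerivAt_neg_integral_Ioi _ (hIcont j hj.le) (hint_all j hj) hs
  refine ⟨?_, ?_, ?_⟩
  -- (i)
  · intro j hj
    refine ⟨hint_all j hj, ?_⟩
    obtain ⟨C, hC, hbound⟩ := (main (j + 1) (Nat.succ_le_of_lt hj)).2
    refine ⟨C, hC, fun s hs => ?_⟩
    have e : b + (((j : ℕ) + 1 : ℕ) : ℝ) - 1 = b + ((j : ℝ) + 1) - 1 := by push_cast; ring
    rw [← e]
    exact hbound s hs
  -- (ii)
  · intro f hf hfc hsupp
    have hfk_diff : ∀ j : ℕ, ContDiff ℝ ∞ (iteratedDeriv j f) := by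
      intro j
      rw [iteratedDeriv_eq_iterate]
      exact (hf.of_le (by simp)).iterate_deriv j
    rcases Set.eq_empty_or_nonempty (tsupport f) with hK | hK
    · have hf0 : f = 0 := by rwa [tsupport_eq_empty_iff] at hK
      subst hf0
      simp [iteratedDeriv_zero_fun']
    obtain ⟨m, hmK, hm_lb⟩ := hfc.exists_isLeast hK
    obtain ⟨M, hMK, hM_ub⟩ := hfc.exists_isGreatest hK
    have hm0 : 0 < m := hsupp hmK
    have hmM : m ≤ M := hM_ub hmK
    set a : ℝ := m / 2 with ha_def
    set B : ℝ := M + 1 with hB_def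
    have ha0 : 0 < a := by positivity
    have ham : a < m := by rw [ha_def]; linarith
    have haB : a < B := by rw [ha_def, hB_def]; linarith
    have hzero' : ∀ j (x : ℝ), x ∉ Set.Icc m M → iteratedDeriv j f x = 0 := by
      intro j x hx
      refine image_eq_zero_of_notMem_tsupport fun hmem => hx ?_
      have hxK := tsupport_iteratedDeriv_subset' f j hmem
      exact ⟨hm_lb hxK, hM_ub hxK⟩
    have conv : ∀ j, ∫ s in Set.Ioi (0 : ℝ), iteratedDeriv j f s * Iiter g j s
        = ∫ s in a..B, iteratedDeriv j f s * Iiter g j s := by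
      intro j
      rw [intervalIntegral.integral_of_le haB.le]
      refine MeasureTheory.setIntegral_eq_of_subset_of_forall_diff_eq_zero measurableSet_Ioi
        (fun x hx => ha0.trans hx.1) ?_
      intro x hx
      have hxnot : x ∉ Set.Icc m M := by
        have h2 : x ≤ a ∨ B < x := by
          rcases le_or_gt x a with h | h
          · exact Or.inl h
          · rcases le_or_gt x B with h' | h'
            · exact absurd ⟨h, h'⟩ hx.2
            · exact Or.inr h'
        intro hc
        rcases h2 with h | h
        · linarith [hc.1]
        · rw [hB_def] at h; linarith [hc.2]
      rw [hzero' j x hxnot, zero_mul]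
    have step : ∀ j, j < k →
        ∫ s in Set.Ioi (0 : ℝ), iteratedDeriv j f s * Iiter g j s
          = -∫ s in Set.Ioi (0 : ℝ), iteratedDeriv (j + 1) f s * Iiter g (j + 1) s := by
      intro j hj
      rw [conv j, conv (j + 1)]
      have huIcc : Set.uIcc a B = Set.Icc a B := Set.uIcc_of_le haB.le
      have huv := intervalIntegral.integral_mul_deriv_eq_deriv_mul
        (u := iteratedDeriv j f) (u' := iteratedDeriv (j + 1) f)
        (v := Iiter g (j + 1)) (v' := Iiter g j) (a := a) (b := B)
        (fun x _ => by
          rw [iteratedDeriv_succ]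
          exact ((hfk_diff j).differentiable (by simp)).differentiableAt.hasDerivAt)
        (fun x hx => by
          rw [huIcc] at hx
          exact hDeriv j hj x (lt_of_lt_of_le ha0 hx.1))
        ((hfk_diff (j + 1)).continuous.intervalIntegrable _ _)
        (((hIcont j hj.le).mono (by
          rw [huIcc]
          exact fun x hx => lt_of_lt_of_le ha0 hx.1)).intervalIntegrable)
      rw [huv]
      have hBout : B ∉ Set.Icc m M := by
        intro hc
        rw [hB_def] at hc
        linarith [hc.2]
      have haout : a ∉ Set.Icc m M := by
        intro hc
        linarith [hc.1]
      rw [hzero' j B hBout, hzero' j a haout]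
      simp
    have key : ∀ j, j ≤ k → ∫ s in Set.Ioi (0 : ℝ), f s * g s
        = (-1 : ℂ) ^ j * ∫ s in Set.Ioi (0 : ℝ), iteratedDeriv j f s * Iiter g j s := by
      intro j hj
      induction j with
      | zero => simp [Iiter, iteratedDeriv_zero]
      | succ j ih =>
        rw [ih (Nat.le_of_succ_le hj), step j (Nat.lt_of_succ_le hj), pow_succ]
        ring
    exact key k le_rfl
  -- (iii)
  · intro f hf hfc
    have hdk : ContDiff ℝ ∞ (iteratedDeriv k f) := by
      rw [iteratedDeriv_eq_iterate]
      exact (hf.of_le (by simp)).iterate_deriv k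
    have hck : HasCompactSupport (iteratedDeriv k f) :=
      hfc.mono' ((subset_tsupport _).trans (tsupport_iteratedDeriv_subset' f k))
    obtain ⟨D, hD⟩ := hdk.continuous.bounded_above_of_compact_support hck
    have hD0 : 0 ≤ D := le_trans (norm_nonneg _) (hD 0)
    obtain ⟨r, hr⟩ := hfc.isBounded.subset_closedBall (0 : ℝ)
    set R : ℝ := max r 1 with hR_def
    have hR0 : 0 < R := lt_of_lt_of_le one_pos (le_max_right _ _)
    have hRsub : tsupport f ⊆ Metric.closedBall 0 R :=
      hr.trans (Metric.closedBall_subset_closedBall (le_max_left _ _))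
    obtain ⟨Ck, hCk, hbCk⟩ := (main k le_rfl).2
    have hsplit : Set.Ioc (0 : ℝ) R ∪ Set.Ioi R = Set.Ioi 0 :=
      Set.Ioc_union_Ioi_eq_Ioi hR0.le
    rw [← hsplit]
    refine MeasureTheory.IntegrableOn.union ?_ ?_
    · refine MeasureTheory.Integrable.mono'
        (g := fun s => (D * Ck) * s ^ (b + (k : ℝ) - 1)) ?_ ?_ ?_
      · have hI : IntegrableOn (fun s : ℝ => s ^ (b + (k : ℝ) - 1)) (Set.Ioc 0 R) := by
          have := intervalIntegral.intervalIntegrable_rpow'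
            (show (-1 : ℝ) < b + (k : ℝ) - 1 by linarith) (a := 0) (b := R)
          rwa [intervalIntegrable_iff_integrableOn_Ioc_of_le hR0.le] at this
        exact hI.const_mul (D * Ck)
      · exact (hdk.continuous.continuousOn.mul
          ((hIcont k le_rfl).mono Set.Ioc_subset_Ioi_self)).aestronglyMeasurable
          measurableSet_Ioc
      · filter_upwards [MeasureTheory.ae_restrict_mem measurableSet_Ioc] with s hs
        have h1 := hD s
        have h2 := hbCk s hs.1
        calc ‖iteratedDeriv k f s * Iiter g k s‖
            = ‖iteratedDeriv k f s‖ * ‖Iiter g k s‖ := norm_mul _ _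
          _ ≤ D * (Ck * s ^ (b + (k : ℝ) - 1)) :=
              mul_le_mul h1 h2 (norm_nonneg _) hD0
          _ = (D * Ck) * s ^ (b + (k : ℝ) - 1) := by ring
    · have heq : Set.EqOn (fun _ : ℝ => (0 : ℂ))
          (fun s => iteratedDeriv k f s * Iiter g k s) (Set.Ioi R) := by
        intro s hs
        have hns : s ∉ tsupport f := by
          intro hmem
          have habs : |s| ≤ R := by
            simpa [Real.dist_eq] using hRsub hmem
          have : s ≤ R := le_trans (le_abs_self s) habs
          exact absurd hs (by simpa using not_lt.mpr this)
        have h0 : iteratedDeriv k f s = 0 :=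
          image_eq_zero_of_notMem_tsupport fun hm => hns (tsupport_iteratedDeriv_subset' f k hm)
        simp [h0]
      exact (MeasureTheory.integrableOn_zero).congr_fun heq measurableSet_Ioi
end
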